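/- arXiv:1910.00586 — 15 statements merged into one kernel-verified Lean document; each statement's English description precedes it below -/
import Mathlib

section
/- Let n ≥ 2, ω = e^{2πi/n}, ν ∈ ℤ/nℤ, and let C be the n×n circulant matrix with generator (n/2 − 1, −ω^ν, −ω^{2ν}, …, −ω^{(n−1)ν}). Then C C* = (n/2)² I, i.e., C satisfies C C* = (d² + n − 1) I with d = n/2 − 1. -/
/-!
Write `C = s • 1 - F` with `s = n / 2` and `F j k = ψ (j - k)` for the additive character
`ψ a = ω^(-ν a)` of `ZMod n`. The character property makes `F` Hermitian with `F * F = n • F`,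
so `C * Cᴴ = (s • 1 - F)^2 = s^2 • 1 + (n - 2 s) • F = s^2 • 1`.
-/

open Matrix Complex

theorem ZMod.exp_two_pi_I_div_pow_eq_stdAddChar (N : ℕ) [NeZero N] (m : ℕ) :
    Complex.exp (2 * Real.pi * I / N) ^ m = ZMod.stdAddChar (m : ZMod N) := by
  rw [ZMod.stdAddChar_apply, ZMod.toCircle_natCast, ← Complex.exp_nat_mul]
  ring_nf

theorem smul_one_sub_mul_self_of_mul_self_eq {K A : Type*} [CommRing K] [Ring A] [Algebra K A]
    (s : K) {F : A} (hF : F * F = (2 * s) • F) :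
    (s • 1 - F) * (s • 1 - F) = s ^ 2 • (1 : A) := by
  simp only [sub_mul, mul_sub, smul_mul_assoc, mul_smul_comm, one_mul, mul_one, hF]
  module

namespace AddChar
variable {G : Type*} [AddCommGroup G] [Fintype G]

theorem circulant_mul_self {R : Type*} [CommSemiring R] (ψ : AddChar G R) :
    circulant ψ * circulant ψ = Fintype.card G • circulant ψ := by
  ext j k
  simp only [Matrix.mul_apply, circulant_apply, Matrix.smul_apply, ← map_add_eq_mul,
    sub_add_sub_cancel]
  simp

theorem conjTranspose_circulant {K : Type*} [RCLike K] (ψ : AddChar G K) :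
    (circulant ψ)ᴴ = circulant ψ := by
  rw [Matrix.conjTranspose_circulant]
  congr 1
  ext i
  simp [map_neg_eq_conj]

end AddChar

theorem stmt0_general (n : ℕ) [NeZero n] (ν : ZMod n)
    (c : ZMod n → ℂ)
    (hc0 : c 0 = (n : ℂ) / 2 - 1)
    (hcj : ∀ j : ZMod n, j ≠ 0 →
      c j = -Complex.exp (2 * Real.pi * Complex.I / n) ^ (j.val * ν.val))
    (C : Matrix (ZMod n) (ZMod n) ℂ)
    (hC : ∀ j k, C j k = c (k - j)) :
    C * C.conjTranspose = (((n : ℂ) / 2) ^ 2) • 1 := by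
  set ψ := (ZMod.stdAddChar (N := n)).mulShift (-ν)
  have hCψ : C = ((n : ℂ) / 2) • 1 - circulant ψ := by
    ext j k
    rw [hC, Matrix.sub_apply, Matrix.smul_apply, one_apply, circulant_apply,
      AddChar.mulShift_apply]
    rcases eq_or_ne j k with rfl | hjk
    · simp [hc0]
    · rw [hcj _ (sub_ne_zero.2 hjk.symm), ZMod.exp_two_pi_I_div_pow_eq_stdAddChar, if_neg hjk]
      push_cast
      rw [ZMod.natCast_zmod_val, ZMod.natCast_zmod_val, smul_zero, zero_sub, neg_mul_comm,
        neg_sub, mul_comm]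
  have hψ : circulant ψ * circulant ψ = (2 * ((n : ℂ) / 2)) • circulant ψ := by
    rw [AddChar.circulant_mul_self, ZMod.card, mul_div_cancel₀ _ two_ne_zero,
      Nat.cast_smul_eq_nsmul]
  rw [hCψ, conjTranspose_sub, conjTranspose_smul, conjTranspose_one,
    AddChar.conjTranspose_circulant]
  simpa using smul_one_sub_mul_self_of_mul_self_eq _ hψ

theorem stmt0 (n : ℕ) [NeZero n] (hn : 2 ≤ n) (ν : ZMod n)
    (c : ZMod n → ℂ)
    (hc0 : c 0 = (n : ℂ) / 2 - 1)
    (hcj : ∀ j : ZMod n, j ≠ 0 →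
      c j = -Complex.exp (2 * Real.pi * Complex.I / n) ^ (j.val * ν.val))
    (C : Matrix (ZMod n) (ZMod n) ℂ)
    (hC : ∀ j k, C j k = c (k - j)) :
    C * C.conjTranspose = (((n : ℂ) / 2) ^ 2) • 1 :=
  stmt0_general n ν c hc0 hcj C hC
end

section
/- Let C be a Hermitian n×n circulant matrix with generator (c₀,…,c_{n−1}) satisfying c₀ = d ≥ 0, |c_j| = 1 for j = 1,…,n−1, C C* = (d² + n − 1) I, and suppose n is even. Then there exists a positive integer k ≤ n/(2√(n−1)) such that √(d² + n − 1) = n/(2k). -/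
/-!
Because `C` is Hermitian, `C * C = r • 1` with `r = d² + n - 1`, so the eigenvalues of `C`, i.e.
the values of the discrete Fourier transform `𝓕 c`, all square to `r`. Fourier inversion at the
element `h = n / 2` of order two, where the character values are `±1`, writes `n • c h` as a sum
of `n` terms `±√r`, that is as `z • √r` with `z ≡ n (mod 2)`. Since `‖c h‖ = 1`, this gives
`n = |z| √r` with `|z| = 2k` even and positive, and `√r ≥ √(n - 1)` bounds `k`.
-/

open Matrix Complex

open Finset ZMod

theorem Finset.exists_sum_eq_zsmul_of_forall_eq_or_eq_neg {ι R : Type*} [AddCommGroup R]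
    [DecidableEq ι] (s : Finset ι) {t : ι → R} {x : R} (ht : ∀ i ∈ s, t i = x ∨ t i = -x) :
    ∃ z : ℤ, Even (z + #s) ∧ ∑ i ∈ s, t i = z • x := by
  induction s using Finset.induction_on with
  | empty => exact ⟨0, by simp⟩
  | insert a s ha ih =>
    obtain ⟨z, hz, hsum⟩ := ih fun i hi => ht i (mem_insert_of_mem hi)
    rw [sum_insert ha, card_insert_of_notMem ha, hsum]
    rcases ht a (mem_insert_self a s) with h | h
    · refine ⟨z + 1, ?_, by rw [h, add_zsmul, one_zsmul, add_comm]⟩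
      rw [show z + 1 + ((#s + 1 : ℕ) : ℤ) = z + #s + 2 by push_cast; ring]
      exact hz.add even_two
    · refine ⟨z - 1, ?_, by rw [h, sub_zsmul, one_zsmul]; abel⟩
      rwa [show z - 1 + ((#s + 1 : ℕ) : ℤ) = z + #s by push_cast; ring]

theorem sum_mul_sub_eq_of_mul_self_eq_smul_one {G R : Type*} [AddCommGroup G] [Fintype G]
    [DecidableEq G] [NonAssocSemiring R] {c : G → R} {C : Matrix G G R}
    (hC : ∀ j k, C j k = c (k - j)) {r : R} (hCC : C * C = r • 1) (a : G) :
    ∑ l, c l * c (a - l) = if a = 0 then r else 0 := by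
  have := congr_fun₂ hCC 0 a
  simp only [mul_apply, hC, sub_zero, Matrix.smul_apply, one_apply, smul_eq_mul, mul_ite,
    mul_one, mul_zero] at this
  simp [this, eq_comm]

theorem AddChar.sum_mul_sq_eq_of_sum_mul_sub_eq {G R : Type*} [AddCommGroup G] [Fintype G]
    [DecidableEq G] [CommRing R] (ψ : AddChar G R) {c : G → R} {r : R}
    (hconv : ∀ a, ∑ l, c l * c (a - l) = if a = 0 then r else 0) :
    (∑ j, ψ j * c j) ^ 2 = r :=
  calc (∑ j, ψ j * c j) ^ 2 = ∑ j, ∑ l, ψ (j + l) * (c j * c l) := by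
        rw [sq, sum_mul_sum]
        simp only [map_add_eq_mul]
        exact sum_congr rfl fun _ _ => sum_congr rfl fun _ _ => by ring
    _ = ∑ j, ∑ a, ψ a * (c j * c (a - j)) := sum_congr rfl fun j _ =>
        Fintype.sum_equiv (Equiv.addLeft j) _ _ fun l => by simp
    _ = ∑ a, ψ a * ∑ j, c j * c (a - j) := by rw [sum_comm]; simp only [mul_sum]
    _ = r := by simp [hconv]

namespace ZMod

variable {n : ℕ} [NeZero n]

theorem dft_sq_eq_of_sum_mul_sub_eq {c : ZMod n → ℂ} {r : ℂ}
    (hconv : ∀ a, ∑ l, c l * c (a - l) = if a = 0 then r else 0) (m : ZMod n) :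
    𝓕 c m ^ 2 = r := by
  have : 𝓕 c m = ∑ j, stdAddChar.mulShift (-m) j * c j := by
    simp [dft_apply, AddChar.mulShift_apply, mul_comm]
  rw [this, AddChar.sum_mul_sq_eq_of_sum_mul_sub_eq _ hconv]

theorem exists_ne_zero_add_self_eq_zero (hn : Even n) : ∃ h : ZMod n, h ≠ 0 ∧ h + h = 0 := by
  obtain ⟨m, hm⟩ := hn
  refine ⟨m, fun h => ?_, by rw [← Nat.cast_add, ← hm, natCast_self]⟩
  rw [natCast_eq_zero_iff _ n] at h
  have := NeZero.ne n
  exact absurd (Nat.eq_zero_of_dvd_of_lt h (by omega)) (by omega)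

theorem exists_natCast_mul_apply_eq_zsmul_of_dft_sq_eq {c : ZMod n → ℂ} {s : ℂ}
    (hdft : ∀ m, 𝓕 c m ^ 2 = s ^ 2) {h : ZMod n} (hh : h + h = 0) :
    ∃ z : ℤ, Even (z + n) ∧ (n : ℂ) * c h = z • s := by
  have hterm (m : ZMod n) : stdAddChar (-(m * h)) • 𝓕 c m = s ∨
      stdAddChar (-(m * h)) • 𝓕 c m = -s := by
    have hchar_sq : stdAddChar (-(m * h)) ^ 2 = (1 : ℂ) := by
      rw [sq, ← AddChar.map_add_eq_mul, ← neg_add, ← mul_add, hh, mul_zero, neg_zero,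
        AddChar.map_zero_eq_one]
    rw [← sq_eq_sq_iff_eq_or_eq_neg, smul_eq_mul, mul_pow, hchar_sq, one_mul, hdft]
  obtain ⟨z, hz_even, hz⟩ := exists_sum_eq_zsmul_of_forall_eq_or_eq_neg univ fun m _ => hterm m
  refine ⟨z, by simpa [ZMod.card] using hz_even, ?_⟩
  rw [← hz, ← dft_apply]
  simp only [dft_dft, neg_eq_of_add_eq_zero_left hh, smul_eq_mul]

end ZMod

theorem exists_pos_nat_sqrt_eq_div_of_natCast_eq_abs_mul_sqrt {n : ℕ} (hn : 2 ≤ n) {d : ℝ}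
    {z : ℤ} (hz : Even z) (hnz : (n : ℝ) = |z| * Real.sqrt (d ^ 2 + n - 1)) :
    ∃ k : ℕ, 0 < k ∧ (k : ℝ) ≤ n / (2 * Real.sqrt (n - 1)) ∧
      Real.sqrt (d ^ 2 + n - 1) = n / (2 * k) := by
  obtain ⟨k, hk⟩ := Int.natAbs_even.mpr hz
  rw [Int.abs_eq_natAbs, hk] at hnz
  push_cast at hnz
  have hn' : (2 : ℝ) ≤ n := by exact_mod_cast hn
  have hk_pos : 0 < k := Nat.pos_of_ne_zero fun hk0 => by simp [hk0] at hnz; omega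
  have hsqrt_pos : 0 < Real.sqrt (n - 1) := Real.sqrt_pos.mpr (by linarith)
  have hsqrt_le : Real.sqrt (n - 1) ≤ Real.sqrt (d ^ 2 + n - 1) :=
    Real.sqrt_le_sqrt (by linarith [sq_nonneg d])
  refine ⟨k, hk_pos, ?_, by rw [eq_div_iff (by positivity)]; linarith⟩
  rw [le_div_iff₀ (by positivity)]
  nlinarith

theorem stmt2_general (n : ℕ) [NeZero n] (hn : 2 ≤ n) (hne : Even n)
    (c : ZMod n → ℂ) (C : Matrix (ZMod n) (ZMod n) ℂ)
    (hC : ∀ j k, C j k = c (k - j))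
    (d : ℝ)
    (hunit : ∀ j : ZMod n, j ≠ 0 → ‖c j‖ = 1)
    (hHerm : C.IsHermitian)
    (horth : C * C.conjTranspose = ((d ^ 2 + n - 1 : ℝ) : ℂ) • 1) :
    ∃ k : ℕ, 0 < k ∧ (k : ℝ) ≤ n / (2 * Real.sqrt (n - 1)) ∧
      Real.sqrt (d ^ 2 + n - 1) = n / (2 * k) := by
  set s := Real.sqrt (d ^ 2 + n - 1)
  have hn1 : (1 : ℝ) ≤ n := by exact_mod_cast (by omega : 1 ≤ n)
  have hs_sq : s ^ 2 = d ^ 2 + n - 1 := Real.sq_sqrt (by linarith [sq_nonneg d])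
  have hdft (m : ZMod n) : 𝓕 c m ^ 2 = (s : ℂ) ^ 2 := by
    rw [dft_sq_eq_of_sum_mul_sub_eq (sum_mul_sub_eq_of_mul_self_eq_smul_one hC
      (hHerm.eq ▸ horth)), ← ofReal_pow, hs_sq]
  obtain ⟨h, h_ne, hh⟩ := exists_ne_zero_add_self_eq_zero hne
  obtain ⟨z, hz_even, hz⟩ := exists_natCast_mul_apply_eq_zsmul_of_dft_sq_eq hdft hh
  have hnorm : (n : ℝ) = |z| * s := by
    have hs_nonneg : 0 ≤ s := Real.sqrt_nonneg _
    simpa [hunit h h_ne, abs_of_nonneg hs_nonneg] using congrArg norm hz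
  exact exists_pos_nat_sqrt_eq_div_of_natCast_eq_abs_mul_sqrt hn
    ((Int.even_add.mp hz_even).mpr (by exact_mod_cast hne)) hnorm

theorem stmt2 (n : ℕ) [NeZero n] (hn : 2 ≤ n) (hne : Even n)
    (c : ZMod n → ℂ) (C : Matrix (ZMod n) (ZMod n) ℂ)
    (hC : ∀ j k, C j k = c (k - j))
    (d : ℝ) (hd : 0 ≤ d) (hc0 : c 0 = (d : ℂ))
    (hunit : ∀ j : ZMod n, j ≠ 0 → ‖c j‖ = 1)
    (hHerm : C.IsHermitian)
    (horth : C * C.conjTranspose = ((d ^ 2 + n - 1 : ℝ) : ℂ) • 1) :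
    ∃ k : ℕ, 0 < k ∧ (k : ℝ) ≤ n / (2 * Real.sqrt (n - 1)) ∧
      Real.sqrt (d ^ 2 + n - 1) = n / (2 * k) :=
  stmt2_general n hn hne c C hC d hunit hHerm horth
end

section
/- Let C be a Hermitian n×n circulant matrix (n even) with generator (c₀,…,c_{n−1}) satisfying c₀ = d ≥ 0, |c_j| = 1 for j = 1,…,n−1, and C C* = (d² + n − 1) I. Then d is rational. -/
/-! The characters `m ↦ stdAddChar (-(m * k))` are common eigenvectors of all circulant
matrices, with eigenvalues the discrete Fourier transform `λ k = 𝓕 c k`. As `C` is Hermitian,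
`C ^ 2` is scalar, so all `λ k ^ 2` agree and `λ k = ± λ 0`. Fourier inversion at a point `a` with
`2 a = 0`, where the characters only take the values `±1`, then makes `n * c a` an integer multiple
of `λ 0`: `n * d = A * λ 0` and `n * c (n / 2) = B * λ 0`. Taking norms, `|c (n / 2)| = 1` gives
`d = |A| / |B|`. -/

open Matrix Complex

theorem mul_mem_zmultiples_of_sq_eq {R : Type*} [CommRing R] [NoZeroDivisors R] {x y z : R}
    (hx : x ^ 2 = 1) (hy : y ^ 2 = z ^ 2) : x * y ∈ AddSubgroup.zmultiples z := by
  have hz := AddSubgroup.mem_zmultiples z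
  rcases sq_eq_one_iff.1 hx with rfl | rfl <;> rcases sq_eq_sq_iff_eq_or_eq_neg.1 hy with rfl | rfl
    <;> simp [hz]

theorem norm_div_norm_eq_of_zsmul_eq {x y L : ℂ} {a b : ℤ} (hx : a • L = x) (hy : b • L = y)
    (hy0 : y ≠ 0) : ‖x‖ / ‖y‖ = |(a : ℝ)| / |(b : ℝ)| := by
  subst hx hy
  have hL : ‖L‖ ≠ 0 := by simpa using right_ne_zero_of_smul hy0
  rw [zsmul_eq_mul, zsmul_eq_mul, norm_mul, norm_mul, Complex.norm_intCast, Complex.norm_intCast,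
    mul_div_mul_right _ _ hL]

namespace ZMod

variable {N : ℕ} [NeZero N]

theorem exists_ne_zero_neg_eq_self (hN : Even N) : ∃ a : ZMod N, a ≠ 0 ∧ -a = a := by
  obtain ⟨m, rfl⟩ := hN
  have hm : m ≠ 0 := fun h => NeZero.ne (m + m) (by omega)
  have hval : (m : ZMod (m + m)).val = m := val_natCast_of_lt (by omega)
  refine ⟨m, fun h => ?_, (neg_eq_self_iff _).2 (Or.inr (by omega))⟩
  rw [h, val_zero] at hval
  exact hm hval.symm

theorem mulVec_stdAddChar_of_circulant {c : ZMod N → ℂ} {C : Matrix (ZMod N) (ZMod N) ℂ}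
    (hC : ∀ j k, C j k = c (k - j)) (k : ZMod N) :
    C *ᵥ (fun m => stdAddChar (-(m * k))) = 𝓕 c k • fun m => stdAddChar (-(m * k)) := by
  ext j
  simp only [mulVec, dotProduct, hC, dft_apply, Pi.smul_apply, smul_eq_mul, Finset.sum_mul]
  refine Fintype.sum_equiv (Equiv.subRight j) _ _ fun m => ?_
  rw [Equiv.subRight_apply, mul_right_comm, ← AddChar.map_add_eq_mul, mul_comm]
  congr 2
  ring

theorem dft_sq_of_circulant_mul_self {c : ZMod N → ℂ} {C : Matrix (ZMod N) (ZMod N) ℂ}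
    (hC : ∀ j k, C j k = c (k - j)) {μ : ℂ} (hCC : C * C = μ • 1) (k : ZMod N) :
    𝓕 c k ^ 2 = μ := by
  have h := congrFun (congrArg (· *ᵥ fun m => stdAddChar (-(m * k))) hCC) 0
  simp only [← mulVec_mulVec, mulVec_stdAddChar_of_circulant hC, mulVec_smul, smul_mulVec,
    one_mulVec, Pi.smul_apply, zero_mul, neg_zero, AddChar.map_zero_eq_one, smul_eq_mul,
    mul_one] at h
  rw [sq, h]

theorem dft_mem_zmultiples_of_sq_eq {Φ : ZMod N → ℂ} (hΦ : ∀ k, Φ k ^ 2 = Φ 0 ^ 2) {a : ZMod N}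
    (ha : -a = a) : 𝓕 Φ a ∈ AddSubgroup.zmultiples (Φ 0) := by
  refine AddSubgroup.sum_mem _ fun j _ => mul_mem_zmultiples_of_sq_eq ?_ (hΦ j)
  have h2a : a + a = 0 := by rw [← neg_add_cancel a, ha]
  rw [sq, ← AddChar.map_add_eq_mul, ← neg_add, ← mul_add, h2a, mul_zero, neg_zero,
    AddChar.map_zero_eq_one]

end ZMod

open ZMod in
theorem stmt3_general (n : ℕ) [NeZero n] (hne : Even n)
    (c : ZMod n → ℂ) (C : Matrix (ZMod n) (ZMod n) ℂ)
    (hC : ∀ j k, C j k = c (k - j))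
    (d : ℝ) (hd : 0 ≤ d) (hc0 : c 0 = (d : ℂ))
    (hunit : ∀ j : ZMod n, j ≠ 0 → ‖c j‖ = 1)
    (hHerm : C.IsHermitian)
    (horth : C * C.conjTranspose = ((d ^ 2 + n - 1 : ℝ) : ℂ) • 1) :
    ∃ q : ℚ, d = (q : ℝ) := by
  rw [hHerm.eq] at horth
  have hsq (k : ZMod n) : 𝓕 c k ^ 2 = 𝓕 c 0 ^ 2 := by
    rw [dft_sq_of_circulant_mul_self hC horth, dft_sq_of_circulant_mul_self hC horth]
  have hmem (a : ZMod n) (ha : -a = a) : (n : ℂ) * c a ∈ AddSubgroup.zmultiples (𝓕 c 0) := by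
    simpa [dft_dft, ha] using dft_mem_zmultiples_of_sq_eq hsq ha
  obtain ⟨h, hh0, hhh⟩ := exists_ne_zero_neg_eq_self hne
  obtain ⟨A, hA⟩ := hmem 0 neg_zero
  obtain ⟨B, hB⟩ := hmem h hhh
  have hratio := norm_div_norm_eq_of_zsmul_eq hA hB <| mul_ne_zero (NeZero.ne _) <| by
    rw [← norm_ne_zero_iff, hunit h hh0]; exact one_ne_zero
  rw [norm_mul, norm_mul, hc0, hunit h hh0, Complex.norm_natCast, Complex.norm_of_nonneg hd,
    mul_one, mul_div_cancel_left₀ _ (Nat.cast_ne_zero.2 (NeZero.ne n))] at hratio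
  exact ⟨|A| / |B|, by push_cast; exact hratio⟩

theorem stmt3 (n : ℕ) [NeZero n] (hn : 2 ≤ n) (hne : Even n)
    (c : ZMod n → ℂ) (C : Matrix (ZMod n) (ZMod n) ℂ)
    (hC : ∀ j k, C j k = c (k - j))
    (d : ℝ) (hd : 0 ≤ d) (hc0 : c 0 = (d : ℂ))
    (hunit : ∀ j : ZMod n, j ≠ 0 → ‖c j‖ = 1)
    (hHerm : C.IsHermitian)
    (horth : C * C.conjTranspose = ((d ^ 2 + n - 1 : ℝ) : ℂ) • 1) :
    ∃ q : ℚ, d = (q : ℝ) :=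
  stmt3_general n hne c C hC d hd hc0 hunit hHerm horth
end

section
/- Let C be a Hermitian n×n circulant matrix (n even) with generator (c₀,…,c_{n−1}) satisfying c₀ = d ≥ 0, |c_j| = 1 for j = 1,…,n−1, and C C* = (d² + n − 1) I. Then d ≤ n/2 − 1. -/
/-!
Since `C` is Hermitian, `C * Cᴴ = C ^ 2 = α • 1` with `α = d² + n - 1`, so every eigenvalue of `C`
is `±√α`. They cannot all be `√α`, for then `C = √α • 1` would vanish off the diagonal, whereas
`|c₁| = 1`. Hence `n * d = trace C ≤ (n - 2) * √α`, and squaring gives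
`4 (n - 1) d² ≤ (n - 1) (n - 2)²`.
-/

lemma Finset.sum_le_card_sub_two_mul_of_eq_neg {ι : Type*} {s : Finset ι} {f : ι → ℝ} {x : ℝ}
    {i₀ : ι} (hi₀ : i₀ ∈ s) (hfi₀ : f i₀ = -x) (hf : ∀ i ∈ s, f i ≤ x) :
    ∑ i ∈ s, f i ≤ (s.card - 2) * x := by
  classical
  have hrest : ∑ i ∈ s.erase i₀, f i ≤ (s.erase i₀).card • x :=
    Finset.sum_le_card_nsmul _ _ _ fun i hi ↦ hf i (Finset.mem_of_mem_erase hi)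
  rw [← Finset.add_sum_erase s f hi₀, hfi₀]
  rw [nsmul_eq_mul, Finset.card_erase_of_mem hi₀,
    Nat.cast_pred (Finset.card_pos.2 ⟨i₀, hi₀⟩)] at hrest
  linarith

namespace Matrix.IsHermitian

variable {𝕜 n : Type*} [RCLike 𝕜] [Fintype n] [DecidableEq n] {A : Matrix n n 𝕜}

lemma eigenvalues_sq_of_mul_self_eq_smul_one (hA : A.IsHermitian) {a : ℝ}
    (h : A * A = (a : 𝕜) • 1) (i : n) : hA.eigenvalues i ^ 2 = a := by
  have : Nonempty n := ⟨i⟩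
  have hsq : A ^ 2 = algebraMap ℝ (Matrix n n 𝕜) a := by
    rw [sq, h, Algebra.algebraMap_eq_smul_one, RCLike.real_smul_eq_coe_smul (K := 𝕜)]
  simpa [hsq, spectrum.scalar_eq] using spectrum.pow_mem_pow A 2 (hA.eigenvalues_mem_spectrum_real i)

lemma eq_smul_one_of_eigenvalues_eq (hA : A.IsHermitian) {t : ℝ}
    (h : ∀ i, hA.eigenvalues i = t) : A = (t : 𝕜) • 1 := by
  have hdiag : diagonal (RCLike.ofReal ∘ hA.eigenvalues) = algebraMap 𝕜 (Matrix n n 𝕜) t := by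
    ext i j
    simp [h, diagonal_apply, algebraMap_matrix_apply]
  rw [hA.spectral_theorem, hdiag, AlgHomClass.commutes, Algebra.algebraMap_eq_smul_one]

lemma re_trace_le_of_mul_self_eq_smul_one (hA : A.IsHermitian) {a : ℝ}
    (h : A * A = (a : 𝕜) • 1) (hne : A ≠ (√a : 𝕜) • 1) :
    RCLike.re A.trace ≤ (Fintype.card n - 2) * √a := by
  have habs : ∀ i, |hA.eigenvalues i| = √a := fun i ↦ by
    rw [← hA.eigenvalues_sq_of_mul_self_eq_smul_one h i, Real.sqrt_sq_eq_abs]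
  obtain ⟨i₀, hi₀⟩ : ∃ i₀, hA.eigenvalues i₀ = -√a := by
    by_contra! hpos
    exact hne (hA.eq_smul_one_of_eigenvalues_eq fun i ↦
      ((abs_eq (Real.sqrt_nonneg a)).1 (habs i)).resolve_right (hpos i))
  rw [hA.trace_eq_sum_eigenvalues]
  simp only [map_sum, RCLike.ofReal_re]
  exact Finset.sum_le_card_sub_two_mul_of_eq_neg (Finset.mem_univ i₀) hi₀
    fun i _ ↦ (le_abs_self _).trans (habs i).le

end Matrix.IsHermitian

lemma le_half_sub_one_of_mul_le_mul_sqrt {n d : ℝ} (hn : 2 ≤ n)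
    (h : n * d ≤ (n - 2) * √(d ^ 2 + n - 1)) : d ≤ n / 2 - 1 := by
  by_contra! hd
  have hsq := Real.sq_sqrt (show 0 ≤ d ^ 2 + n - 1 by nlinarith)
  have hsq_le : (n * d) ^ 2 ≤ ((n - 2) * √(d ^ 2 + n - 1)) ^ 2 :=
    pow_le_pow_left₀ (by nlinarith) h 2
  rw [mul_pow, mul_pow, hsq] at hsq_le
  have hgap : 0 < (n - 1) * (2 * d - (n - 2)) * (2 * d + (n - 2)) :=
    mul_pos (mul_pos (by linarith) (by linarith)) (by linarith)
  nlinarith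

open Matrix

theorem stmt4_general (n : ℕ) [NeZero n] (hn : 2 ≤ n)
    (c : ZMod n → ℂ) (C : Matrix (ZMod n) (ZMod n) ℂ)
    (hC : ∀ j k, C j k = c (k - j))
    (d : ℝ) (hc0 : c 0 = (d : ℂ))
    (hunit : ∀ j : ZMod n, j ≠ 0 → ‖c j‖ = 1)
    (hHerm : C.IsHermitian)
    (horth : C * C.conjTranspose = ((d ^ 2 + n - 1 : ℝ) : ℂ) • 1) :
    d ≤ (n : ℝ) / 2 - 1 := by
  have : Fact (1 < n) := ⟨hn⟩
  have htrace : C.trace = n * d := by simp [trace, hC, hc0]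
  have hne : C ≠ (√(d ^ 2 + n - 1) : ℂ) • 1 := fun h ↦ by
    have h01 : c 1 = 0 := by simpa [h] using (hC 0 1).symm
    simpa [h01] using hunit 1 one_ne_zero
  have hbound := hHerm.re_trace_le_of_mul_self_eq_smul_one (by rwa [hHerm.eq] at horth) hne
  rw [htrace, ZMod.card] at hbound
  exact le_half_sub_one_of_mul_le_mul_sqrt (by exact_mod_cast hn) (by simpa using hbound)

theorem stmt4 (n : ℕ) [NeZero n] (hn : 2 ≤ n) (hne : Even n)
    (c : ZMod n → ℂ) (C : Matrix (ZMod n) (ZMod n) ℂ)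
    (hC : ∀ j k, C j k = c (k - j))
    (d : ℝ) (hd : 0 ≤ d) (hc0 : c 0 = (d : ℂ))
    (hunit : ∀ j : ZMod n, j ≠ 0 → ‖c j‖ = 1)
    (hHerm : C.IsHermitian)
    (horth : C * C.conjTranspose = ((d ^ 2 + n - 1 : ℝ) : ℂ) • 1) :
    d ≤ (n : ℝ) / 2 - 1 :=
  stmt4_general n hn c C hC d hc0 hunit hHerm horth
end

section
/- Let C be a Hermitian n×n circulant matrix (n even) satisfying c₀ = d with d a nonnegative integer, |c_j| = 1 for j = 1,…,n−1, and C C* = (d² + n − 1) I. Then d² + n − 1 is a perfect square. -/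
/-!
For every character `ψ` of `ZMod n`, the vector `j ↦ ψ j` is an eigenvector of each circulant
matrix; the eigenvalues are the discrete Fourier coefficients `μ k = 𝓕 c k`. As `C` is Hermitian,
`C * C = s • 1` with `s = d² + n - 1`, so every `μ k = ±√s`. Fourier inversion at `0` and at the
half period `h = n / 2` gives `∑ μ k = n d` and `∑ (-1)ᵏ μ k = n c_h`, where `c_h = ±1` since
`-h = h` makes it real. Hence the positive integer `n (d + 1) = ∑ (1 + c_h (-1)ᵏ) μ k` is an
integer multiple of `√s`, so `√s` is rational.
-/

open Matrix Complex ZMod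

lemma mem_zmultiples_of_sq_eq_sq {R : Type*} [CommRing R] [NoZeroDivisors R] {x y : R}
    (h : x ^ 2 = y ^ 2) : x ∈ AddSubgroup.zmultiples y := by
  rcases sq_eq_sq_iff_eq_or_eq_neg.1 h with rfl | rfl
  · exact AddSubgroup.mem_zmultiples x
  · exact neg_mem (AddSubgroup.mem_zmultiples y)

lemma AddSubgroup.mul_mem_of_sq_eq_one {R : Type*} [Ring R] [NoZeroDivisors R]
    {H : AddSubgroup R} {u x : R} (hu : u ^ 2 = 1) (hx : x ∈ H) : u * x ∈ H := by
  rcases sq_eq_one_iff.1 hu with rfl | rfl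
  · rwa [one_mul]
  · rwa [neg_one_mul, neg_mem_iff]

lemma isSquare_of_intCast_mul_sqrt_eq_natCast {s N : ℕ} {z : ℤ} (hN : N ≠ 0)
    (h : z * √(s : ℝ) = N) : IsSquare s := by
  by_contra hs
  have hz : z ≠ 0 := by
    rintro rfl
    rw [Int.cast_zero, zero_mul] at h
    exact hN (by exact_mod_cast h.symm)
  exact ((irrational_sqrt_natCast_iff.2 hs).intCast_mul hz).ne_nat N h

lemma Matrix.mulVec_addChar {G R : Type*} [AddCommGroup G] [Fintype G] [CommRing R]
    (c : G → R) (ψ : AddChar G R) :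
    (Matrix.of fun j l => c (l - j)) *ᵥ ψ = (∑ t, c t * ψ t) • ⇑ψ := by
  ext j
  simp only [mulVec, dotProduct, of_apply, Pi.smul_apply, smul_eq_mul, Finset.sum_mul]
  rw [← Equiv.sum_comp (Equiv.addLeft j)]
  refine Finset.sum_congr rfl fun t _ => ?_
  simp only [Equiv.coe_addLeft, add_sub_cancel_left, AddChar.map_add_eq_mul]
  ring

lemma Matrix.sq_eq_of_mulVec_eq_smul {m R : Type*} [Fintype m] [DecidableEq m] [CommRing R]
    [NoZeroDivisors R] {A : Matrix m m R} {s μ : R} {v : m → R}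
    (hA : A * A = s • 1) (hv : A *ᵥ v = μ • v) (hv0 : v ≠ 0) : μ ^ 2 = s := by
  obtain ⟨i, hi⟩ := Function.ne_iff.1 hv0
  have h : μ ^ 2 • v = s • v := by
    calc μ ^ 2 • v = A *ᵥ (A *ᵥ v) := by rw [hv, mulVec_smul, hv, smul_smul, sq]
      _ = s • v := by rw [mulVec_mulVec, hA, smul_mulVec, one_mulVec]
  exact mul_right_cancel₀ hi (congrFun h i)

lemma ZMod.dft_sq_eq_of_mul_self_eq_smul_one {N : ℕ} [NeZero N] {c : ZMod N → ℂ}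
    {C : Matrix (ZMod N) (ZMod N) ℂ} (hC : ∀ j k, C j k = c (k - j)) {s : ℂ}
    (hCC : C * C = s • 1) (k : ZMod N) : 𝓕 c k ^ 2 = s := by
  have hC' : C = of fun j l => c (l - j) := Matrix.ext hC
  refine sq_eq_of_mulVec_eq_smul hCC (v := stdAddChar.mulShift (-k)) ?_ fun h0 => ?_
  · rw [hC', mulVec_addChar, dft_apply]
    congr 1
    refine Finset.sum_congr rfl fun t _ => ?_
    rw [AddChar.mulShift_apply, smul_eq_mul, neg_mul, mul_comm t, mul_comm]
  · simpa using congrFun h0 0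

lemma star_eq_apply_neg_of_isHermitian {G α : Type*} [AddCommGroup G] [Star α] {c : G → α}
    {C : Matrix G G α} (hC : ∀ j k, C j k = c (k - j)) (hHerm : C.IsHermitian) (t : G) :
    star (c t) = c (-t) := by
  simpa [hC] using hHerm.apply t 0

lemma sq_apply_eq_one_of_isHermitian {G : Type*} [AddCommGroup G] {c : G → ℂ}
    {C : Matrix G G ℂ} (hC : ∀ j k, C j k = c (k - j)) (hHerm : C.IsHermitian) {t : G}
    (ht : -t = t) (hct : ‖c t‖ = 1) : c t ^ 2 = 1 := by
  rw [sq]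
  nth_rw 2 [← ht]
  rw [← star_eq_apply_neg_of_isHermitian hC hHerm, RCLike.star_def, mul_conj', hct]
  simp

lemma AddChar.sq_eq_one_of_add_self_eq_zero {A M : Type*} [AddMonoid A] [Monoid M]
    (ψ : AddChar A M) {x : A} (hx : x + x = 0) : ψ x ^ 2 = 1 := by
  rw [sq, ← AddChar.map_add_eq_mul, hx, AddChar.map_zero_eq_one]

lemma ZMod.natCast_half_ne_zero {n h : ℕ} [NeZero n] (hh : n = h + h) : (h : ZMod n) ≠ 0 := by
  rw [Ne, ZMod.natCast_eq_zero_iff]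
  have hn := NeZero.ne n
  exact fun hdvd => by have := Nat.eq_zero_of_dvd_of_lt hdvd (by omega); omega

lemma ZMod.natCast_half_add_self {n h : ℕ} (hh : n = h + h) : (h : ZMod n) + h = 0 := by
  rw [← Nat.cast_add, ← hh, ZMod.natCast_self]

lemma ZMod.sum_dft_add_mul_stdAddChar_mul_dft {N : ℕ} [NeZero N] (c : ZMod N → ℂ) (a : ℂ)
    (u : ZMod N) :
    ∑ k, (𝓕 c k + a * stdAddChar (-(k * u)) * 𝓕 c k) = N * (c 0 + a * c (-u)) := by
  have hinv (j : ZMod N) : ∑ k, stdAddChar (-(k * j)) * 𝓕 c k = N * c (-j) := by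
    simpa [dft_apply] using congrFun (dft_dft c) j
  have h0 := hinv 0
  simp only [mul_zero, neg_zero, AddChar.map_zero_eq_one, one_mul] at h0
  simp only [Finset.sum_add_distrib, h0, mul_assoc, ← Finset.mul_sum, hinv]
  ring

theorem stmt5_general (n : ℕ) [NeZero n] (hne : Even n)
    (c : ZMod n → ℂ) (C : Matrix (ZMod n) (ZMod n) ℂ)
    (hC : ∀ j k, C j k = c (k - j))
    (d : ℕ)  (hc0 : c 0 = (d : ℂ))
    (hunit : ∀ j : ZMod n, j ≠ 0 → ‖c j‖ = 1)
    (hHerm : C.IsHermitian)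
    (horth : C * C.conjTranspose = (((d : ℝ) ^ 2 + n - 1 : ℝ) : ℂ) • 1)
     :
    ∃ ℓ : ℕ, ℓ ^ 2 = d ^ 2 + n - 1 := by
  obtain ⟨h, hh⟩ := hne
  set S := d ^ 2 + n - 1
  have hS : (((d : ℝ) ^ 2 + n - 1 : ℝ) : ℂ) = ((√(S : ℝ) : ℝ) : ℂ) ^ 2 := by
    rw [← ofReal_pow, Real.sq_sqrt (Nat.cast_nonneg _), Nat.cast_sub (le_add_left NeZero.one_le)]
    push_cast
    ring
  have hμ := dft_sq_eq_of_mul_self_eq_smul_one hC (hHerm.eq ▸ horth)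
  rw [hS] at hμ
  have hhalf := natCast_half_add_self hh
  have hch : c h ^ 2 = 1 := sq_apply_eq_one_of_isHermitian hC hHerm
    (neg_eq_of_add_eq_zero_left hhalf) (hunit _ (natCast_half_ne_zero hh))
  have hw (k : ZMod n) : (c h * stdAddChar (-(k * (h : ZMod n)))) ^ 2 = 1 := by
    rw [mul_pow, hch, one_mul]
    exact stdAddChar.sq_eq_one_of_add_self_eq_zero (by rw [← neg_add, ← mul_add, hhalf]; simp)
  have hsum := sum_dft_add_mul_stdAddChar_mul_dft c (c h) h
  rw [neg_eq_of_add_eq_zero_left hhalf, ← sq, hch, hc0] at hsum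
  have hmem : ((n * (d + 1) : ℕ) : ℂ) ∈ AddSubgroup.zmultiples ((√(S : ℝ) : ℝ) : ℂ) := by
    rw [Nat.cast_mul, Nat.cast_succ, ← hsum]
    refine AddSubgroup.sum_mem _ fun k _ => add_mem ?_ ?_
    · exact mem_zmultiples_of_sq_eq_sq (hμ k)
    · exact AddSubgroup.mul_mem_of_sq_eq_one (hw k) (mem_zmultiples_of_sq_eq_sq (hμ k))
  obtain ⟨z, hz⟩ := hmem
  simp only [zsmul_eq_mul] at hz
  obtain ⟨ℓ, hℓ⟩ := isSquare_of_intCast_mul_sqrt_eq_natCast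
    (mul_ne_zero (NeZero.ne n) d.succ_ne_zero) (by exact_mod_cast hz)
  exact ⟨ℓ, by rw [sq, ← hℓ]⟩

theorem stmt5 (n : ℕ) [NeZero n] (hn : 2 ≤ n) (hne : Even n)
    (c : ZMod n → ℂ) (C : Matrix (ZMod n) (ZMod n) ℂ)
    (hC : ∀ j k, C j k = c (k - j))
    (d : ℕ)  (hc0 : c 0 = (d : ℂ))
    (hunit : ∀ j : ZMod n, j ≠ 0 → ‖c j‖ = 1)
    (hHerm : C.IsHermitian)
    (horth : C * C.conjTranspose = (((d : ℝ) ^ 2 + n - 1 : ℝ) : ℂ) • 1)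
     :
    ∃ ℓ : ℕ, ℓ ^ 2 = d ^ 2 + n - 1 :=
  stmt5_general n hne c C hC d hc0 hunit hHerm horth
end

section
/- Let C be a Hermitian n×n circulant matrix (n even) satisfying c₀ = d with d a nonnegative integer, |c_j| = 1 for j = 1,…,n−1, and C C* = (d² + n − 1) I. Then ℓ := √(d² + n − 1) is an integer dividing n/2. -/
/-!
The eigenvalues `λ m = ∑ j, c j * ψ (j * m)` of `C` (`ψ` the standard character of `ZMod n`)
satisfy `λ m ^ 2 = K := d ^ 2 + n - 1`, because `C * C = C * Cᴴ = K • 1`. Hence `λ m = ± λ 0`,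
and two character sums control the signs. `∑ m, λ m = n * d` gives `e ^ 2 * K = (n * d) ^ 2` for
an integer `e`, and `∑ m, λ m * λ (m + 1) = n * ∑ t, |c t| ^ 2 * ψ t = n * (d ^ 2 - 1)` gives
`(n - 2 r) * K = n * (d ^ 2 - 1)`, i.e. `K * 2 r = n ^ 2`, where `r` counts the sign changes of
`λ`. If `d = 0`, then `K = n - 1` is coprime to `n`, so `K = 1`. Otherwise `2 r = (e / d) ^ 2` is
an even square `w ^ 2`, and `K * w ^ 2 = n ^ 2` makes `K = (n / w) ^ 2` with `n / w ∣ n / 2`.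
-/

open Matrix Complex ComplexConjugate Finset

namespace AddChar

variable {R R' : Type*} [CommRing R] [Fintype R] [CommRing R'] (ψ : AddChar R R')

/-- For `f = c`, this is the eigenvalue of the circulant matrix `fun j k ↦ c (k - j)` on the
eigenvector `fun k ↦ ψ (k * m)`. -/
def fourierSum (f : R → R') (m : R) : R' := ∑ j, f j * ψ (j * m)

theorem fourierSum_mul_fourierSum (f g : R → R') (m : R) :
    ψ.fourierSum f m * ψ.fourierSum g m = ψ.fourierSum (fun s ↦ ∑ t, f t * g (s - t)) m := by
  calc ψ.fourierSum f m * ψ.fourierSum g m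
      = ∑ t, ∑ j, f t * g j * ψ ((t + j) * m) := by
        rw [fourierSum, fourierSum, sum_mul_sum]
        refine sum_congr rfl fun t _ ↦ sum_congr rfl fun j _ ↦ ?_
        rw [add_mul, map_add_eq_mul]
        ring
    _ = ∑ t, ∑ s, f t * g (s - t) * ψ (s * m) :=
        sum_congr rfl fun t _ ↦ Fintype.sum_equiv (Equiv.addLeft t) _ _ fun j ↦ by simp
    _ = ψ.fourierSum (fun s ↦ ∑ t, f t * g (s - t)) m := by
        rw [sum_comm, fourierSum]
        simp only [sum_mul]

variable [DecidableEq R]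

theorem fourierSum_sq_of_mul_self_eq_smul_one {c : R → R'} {C : Matrix R R R'}
    (hC : ∀ j k, C j k = c (k - j)) {k : R'} (hCC : C * C = k • 1) (m : R) :
    ψ.fourierSum c m ^ 2 = k := by
  have hconv : (fun s ↦ ∑ t, c t * c (s - t)) = fun s ↦ if s = 0 then k else 0 := by
    funext s
    have h := congrFun (congrFun hCC 0) s
    simp only [Matrix.mul_apply, hC, sub_zero, Matrix.smul_apply, Matrix.one_apply, smul_eq_mul,
      mul_ite, mul_one, mul_zero] at h
    rw [h]
    exact if_congr eq_comm rfl rfl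
  rw [sq, fourierSum_mul_fourierSum, hconv, fourierSum]
  simp

variable [IsDomain R'] {ψ}

theorem sum_apply_mul (hψ : ψ.IsPrimitive) (b : R) :
    ∑ m, ψ (b * m) = if b = 0 then (Fintype.card R : R') else 0 := by
  simpa only [mul_comm, Nat.cast_ite, Nat.cast_zero] using sum_mulShift b hψ

theorem sum_fourierSum (hψ : ψ.IsPrimitive) (f : R → R') :
    ∑ m, ψ.fourierSum f m = Fintype.card R * f 0 := by
  simp only [fourierSum]
  rw [sum_comm]
  simp [← mul_sum, sum_apply_mul hψ, mul_comm]

theorem sum_fourierSum_mul_fourierSum_add (hψ : ψ.IsPrimitive) (f g : R → R') (a : R) :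
    ∑ m, ψ.fourierSum f m * ψ.fourierSum g (m + a) =
      Fintype.card R * ∑ t, f (-t) * g t * ψ (t * a) := by
  calc ∑ m, ψ.fourierSum f m * ψ.fourierSum g (m + a)
      = ∑ m, ∑ t, ∑ j, f j * g t * ψ (t * a) * ψ ((j + t) * m) := by
        refine sum_congr rfl fun m _ ↦ ?_
        rw [fourierSum, fourierSum, sum_mul_sum, sum_comm]
        refine sum_congr rfl fun t _ ↦ sum_congr rfl fun j _ ↦ ?_
        rw [mul_add, add_mul, map_add_eq_mul, map_add_eq_mul]
        ring
    _ = ∑ t, ∑ j, f j * g t * ψ (t * a) * ∑ m, ψ ((j + t) * m) := by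
        rw [sum_comm]
        refine sum_congr rfl fun t _ ↦ ?_
        rw [sum_comm]
        simp only [mul_sum]
    _ = Fintype.card R * ∑ t, f (-t) * g t * ψ (t * a) := by
        simp only [sum_apply_mul hψ, add_eq_zero_iff_eq_neg, mul_ite, mul_zero, sum_ite_eq',
          mem_univ, if_true, mul_sum]
        exact sum_congr rfl fun t _ ↦ by ring

theorem sum_mul_eq_sub_one [Nontrivial R] (hψ : ψ.IsPrimitive) {u : R → R'}
    (hu : ∀ t ≠ 0, u t = 1) : ∑ t, u t * ψ t = u 0 - 1 := by
  have hψsum : ∑ t, ψ t = 0 := by simpa using sum_mulShift (1 : R) hψ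
  calc ∑ t, u t * ψ t = ∑ t, (u t - 1) * ψ t + ∑ t, ψ t := by
        rw [← sum_add_distrib]
        exact sum_congr rfl fun t _ ↦ by ring
    _ = u 0 - 1 := by
        rw [hψsum, add_zero, sum_eq_single 0 (fun t _ ht ↦ by rw [hu t ht, sub_self, zero_mul])
          (by simp), map_zero_eq_one, mul_one]

end AddChar

section Signs

variable {ι F : Type*} [Fintype ι] [CommRing F] [IsDomain F] {Λ : ι → F} {k : F}

theorem exists_sum_sq_eq_natCast_sq_mul (h : ∀ i, Λ i ^ 2 = k) :
    ∃ a : ℕ, (∑ i, Λ i) ^ 2 = a ^ 2 * k := by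
  classical
  rcases isEmpty_or_nonempty ι with hι | ⟨⟨i₀⟩⟩
  · exact ⟨0, by simp⟩
  set e : ℤ := ∑ i, if Λ i = Λ i₀ then 1 else -1
  have hsum : ∑ i, Λ i = e * Λ i₀ := by
    simp only [e, Int.cast_sum, sum_mul]
    refine sum_congr rfl fun i _ ↦ ?_
    split_ifs with hi
    · simp [hi]
    · simp [(sq_eq_sq_iff_eq_or_eq_neg.mp ((h i).trans (h i₀).symm)).resolve_left hi]
  refine ⟨e.natAbs, ?_⟩
  have hnat : ((e.natAbs : ℕ) : F) ^ 2 = (e : F) ^ 2 := by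
    rw [← Int.cast_natCast, ← Int.cast_pow, Int.natAbs_sq, Int.cast_pow]
  rw [hsum, hnat, mul_pow, h]

theorem exists_sum_mul_comp_eq_of_sq_eq (σ : ι → ι) (h : ∀ i, Λ i ^ 2 = k) :
    ∃ r : ℕ, ∑ i, Λ i * Λ (σ i) = (Fintype.card ι - 2 * r) * k := by
  classical
  refine ⟨#{i | Λ (σ i) ≠ Λ i}, ?_⟩
  have hterm : ∀ i, Λ i * Λ (σ i) = if Λ (σ i) ≠ Λ i then -k else k := by
    intro i
    split_ifs with hne
    · have hneg : Λ (σ i) = -Λ i :=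
        (sq_eq_sq_iff_eq_or_eq_neg.mp ((h (σ i)).trans (h i).symm)).resolve_left hne
      rw [hneg, mul_neg, ← sq, h]
    · rw [not_not.mp hne, ← sq, h]
  have hcard := card_filter_add_card_filter_not (s := univ) (fun i ↦ Λ (σ i) ≠ Λ i)
  rw [card_univ] at hcard
  simp only [hterm, sum_ite, sum_const, nsmul_eq_mul]
  rw [← hcard]
  push_cast
  ring

end Signs

theorem exists_sq_eq_and_dvd_half_of_mul_sq_eq {K n w : ℕ} (hn : n ≠ 0) (hKw : K * w ^ 2 = n ^ 2)
    (hw : 2 ∣ w) : ∃ ℓ, ℓ ^ 2 = K ∧ ℓ ∣ n / 2 := by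
  obtain ⟨ℓ, hℓ⟩ : w ∣ n := (Nat.pow_dvd_pow_iff two_ne_zero).mp ⟨K, by rw [← hKw, mul_comm]⟩
  have hw0 : 0 < w := Nat.pos_of_ne_zero fun h ↦ hn (by rw [hℓ, h, zero_mul])
  have hKℓ : K = ℓ ^ 2 := by
    refine Nat.eq_of_mul_eq_mul_right (pow_pos hw0 2) ?_
    rw [hKw, hℓ]
    ring
  obtain ⟨v, rfl⟩ := hw
  exact ⟨ℓ, hKℓ.symm, v, by rw [hℓ, mul_assoc, Nat.mul_div_cancel_left _ two_pos, mul_comm]⟩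

theorem exists_sq_eq_and_dvd_half {n d r a : ℕ} (hn : 2 ≤ n)
    (hr : (d ^ 2 + n - 1) * (2 * r) = n ^ 2) (ha : (n * d) ^ 2 = a ^ 2 * (d ^ 2 + n - 1)) :
    ∃ ℓ, ℓ ^ 2 = d ^ 2 + n - 1 ∧ ℓ ∣ n / 2 := by
  set K := d ^ 2 + n - 1 with hK
  have hKpos : 0 < K := by omega
  rcases Nat.eq_zero_or_pos d with rfl | hd
  · have hcop : K.Coprime (n ^ 2) := by
      refine Nat.Coprime.pow_right 2 ?_
      rw [hK, zero_pow two_ne_zero, zero_add, Nat.coprime_self_sub_left (by omega)]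
      exact Nat.coprime_one_left n
    have hK1 : K = 1 := Nat.Coprime.eq_one_of_dvd hcop ⟨2 * r, hr.symm⟩
    exact ⟨1, hK1.symm ▸ rfl, one_dvd _⟩
  have ha' : a ^ 2 = (2 * r) * d ^ 2 := by
    refine Nat.eq_of_mul_eq_mul_right hKpos ?_
    rw [← ha, mul_pow, ← hr]
    ring
  obtain ⟨w, rfl⟩ : d ∣ a :=
    (Nat.pow_dvd_pow_iff two_ne_zero).mp ⟨2 * r, by rw [ha']; ring⟩
  have hw : w ^ 2 = 2 * r := by
    refine Nat.eq_of_mul_eq_mul_left (pow_pos hd 2) ?_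
    rw [← mul_pow, ha']
    ring
  exact exists_sq_eq_and_dvd_half_of_mul_sq_eq (by omega) (by rw [hw, hr])
    (Nat.prime_two.dvd_of_dvd_pow (hw ▸ dvd_mul_right 2 r))

theorem stmt6_general (n : ℕ) [NeZero n] (hn : 2 ≤ n)
    (c : ZMod n → ℂ) (C : Matrix (ZMod n) (ZMod n) ℂ)
    (hC : ∀ j k, C j k = c (k - j))
    (d : ℕ)  (hc0 : c 0 = (d : ℂ))
    (hunit : ∀ j : ZMod n, j ≠ 0 → ‖c j‖ = 1)
    (hHerm : C.IsHermitian)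
    (horth : C * C.conjTranspose = (((d : ℝ) ^ 2 + n - 1 : ℝ) : ℂ) • 1)
     :
    ∃ ℓ : ℕ, ℓ ^ 2 = d ^ 2 + n - 1 ∧ ℓ ∣ n / 2 := by
  have : Fact (1 < n) := ⟨hn⟩
  have hψ := ZMod.isPrimitive_stdAddChar n
  have hK : ((d ^ 2 + n - 1 : ℕ) : ℂ) = (d : ℂ) ^ 2 + n - 1 := by
    push_cast [Nat.cast_sub (by omega : 1 ≤ d ^ 2 + n)]
    ring
  have hCC : C * C = ((d ^ 2 + n - 1 : ℕ) : ℂ) • 1 := by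
    push_cast at horth
    rw [hHerm.eq] at horth
    rwa [hK]
  have hsq := AddChar.fourierSum_sq_of_mul_self_eq_smul_one ZMod.stdAddChar hC hCC
  have hnorm : ∀ t ≠ 0, c (-t) * c t = 1 := fun t ht ↦ by
    have hstar : c (-t) = conj (c t) := by simpa [hC] using (hHerm.apply t 0).symm
    rw [hstar, conj_mul', hunit t ht]
    norm_num
  obtain ⟨a, ha⟩ := exists_sum_sq_eq_natCast_sq_mul hsq
  rw [AddChar.sum_fourierSum hψ, ZMod.card, hc0] at ha
  obtain ⟨r, hr⟩ := exists_sum_mul_comp_eq_of_sq_eq (· + 1) hsq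
  have hshift := AddChar.sum_fourierSum_mul_fourierSum_add hψ c c 1
  rw [hr, ZMod.card] at hshift
  simp only [mul_one] at hshift
  rw [AddChar.sum_mul_eq_sub_one hψ hnorm, neg_zero, hc0] at hshift
  refine exists_sq_eq_and_dvd_half hn (r := r) ?_ (by exact_mod_cast ha)
  have : (((d ^ 2 + n - 1) * (2 * r) : ℕ) : ℂ) = ((n ^ 2 : ℕ) : ℂ) := by
    push_cast [hK] at hshift ⊢
    linear_combination -hshift
  exact_mod_cast this

theorem stmt6 (n : ℕ) [NeZero n] (hn : 2 ≤ n) (hne : Even n)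
    (c : ZMod n → ℂ) (C : Matrix (ZMod n) (ZMod n) ℂ)
    (hC : ∀ j k, C j k = c (k - j))
    (d : ℕ)  (hc0 : c 0 = (d : ℂ))
    (hunit : ∀ j : ZMod n, j ≠ 0 → ‖c j‖ = 1)
    (hHerm : C.IsHermitian)
    (horth : C * C.conjTranspose = (((d : ℝ) ^ 2 + n - 1 : ℝ) : ℂ) • 1)
     :
    ∃ ℓ : ℕ, ℓ ^ 2 = d ^ 2 + n - 1 ∧ ℓ ∣ n / 2 :=
  stmt6_general n hn c C hC d hc0 hunit hHerm horth
end

section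
/- Let C be a Hermitian n×n circulant matrix (n even) satisfying c₀ = d with d a nonnegative integer, |c_j| = 1 for j = 1,…,n−1, and C C* = (d² + n − 1) I. Then ℓ := √(d² + n − 1) divides d² − 1; moreover if d is odd then 2ℓ divides d² − 1. -/
open Matrix Complex

open ComplexConjugate Finset

/-!
The eigenvalues of the circulant `C` are the Fourier coefficients `λ k = 𝓕 c k`. Since `C` is
Hermitian with `C² = L • 1`, `L = d² + n - 1`, each `λ k` equals `ε k * √L` with `ε k = ±1`. The
trace gives `(∑ ε k) √L = n d`, and the shifted Parseval identity gives
`∑ λ k λ (k + 1) = n ∑ |c j|² ψ j = n (d² - 1)`, i.e. `L R = n (d² - 1)` with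
`R = ∑ ε k ε (k + 1)`, which is even because `n` is. The first relation makes `L` a perfect square
`ℓ²` (when `d = 0` the second forces `L = 1`). The second says `X² = ℓ² (X - R)` for `X = d² - 1`,
so `ℓ ∣ X`; for odd `d`, `ℓ` is even and `X = ℓ s` with `s² = ℓ s - R` even.
-/

namespace ZMod

variable {N : ℕ} [NeZero N]

lemma dft_mul_dft (f g : ZMod N → ℂ) (k : ZMod N) :
    𝓕 f k * 𝓕 g k = 𝓕 (fun t ↦ ∑ j, f j * g (t - j)) k := by
  rw [dft_apply, dft_apply, dft_apply, sum_mul_sum]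
  simp_rw [smul_sum]
  conv_rhs => rw [sum_comm]
  refine sum_congr rfl fun j _ ↦ Fintype.sum_equiv (Equiv.addLeft j) _ _ fun i ↦ ?_
  simp only [Equiv.coe_addLeft, add_sub_cancel_left, add_mul, neg_add, AddChar.map_add_eq_mul,
    smul_eq_mul]
  ring

lemma sum_dft (f : ZMod N → ℂ) : ∑ k, 𝓕 f k = N * f 0 := by
  rw [← dft_apply_zero, dft_dft]
  simp

lemma sum_dft_mul_dft (f g : ZMod N → ℂ) :
    ∑ k, 𝓕 f k * 𝓕 g k = N * ∑ j, f j * g (-j) := by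
  simp only [dft_mul_dft, sum_dft, zero_sub]

lemma dft_apply_add (g : ZMod N → ℂ) (k a : ZMod N) :
    𝓕 g (k + a) = 𝓕 (fun j ↦ stdAddChar (-(j * a)) * g j) k := by
  simp only [dft_apply, smul_eq_mul, mul_add, neg_add, AddChar.map_add_eq_mul, mul_assoc]

lemma sum_dft_mul_dft_add (f g : ZMod N → ℂ) (a : ZMod N) :
    ∑ k, 𝓕 f k * 𝓕 g (k + a) = N * ∑ j, f j * g (-j) * stdAddChar (j * a) := by
  simp only [dft_apply_add, sum_dft_mul_dft, neg_mul, neg_neg]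
  exact congrArg _ (sum_congr rfl fun j _ ↦ by ring)

lemma dft_sq_of_sum_mul_apply_sub {c : ZMod N → ℂ} {a : ℂ}
    (hc : ∀ t, ∑ j, c j * c (t - j) = if t = 0 then a else 0) (k : ZMod N) :
    𝓕 c k ^ 2 = a := by
  rw [sq, dft_mul_dft, funext hc]
  simp [dft_apply]

lemma sum_stdAddChar [Fact (1 < N)] : ∑ j : ZMod N, stdAddChar j = 0 := by
  simpa using AddChar.sum_eq_zero_of_ne_one (isPrimitive_stdAddChar N one_ne_zero)

end ZMod

open ZMod

lemma exists_sign_mul_sqrt {ι : Type*} {z : ι → ℂ} {a : ℝ} (ha : 0 ≤ a)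
    (hz : ∀ i, z i ^ 2 = a) :
    ∃ ε : ι → ℤ, (∀ i, ε i = 1 ∨ ε i = -1) ∧ ∀ i, z i = ε i * √a := by
  have h i : z i = √a ∨ z i = -√a := by
    rw [← sq_eq_sq_iff_eq_or_eq_neg, hz, ← ofReal_pow, Real.sq_sqrt ha]
  classical
  refine ⟨fun i ↦ if z i = √a then 1 else -1, fun i ↦ by dsimp only; split_ifs <;> simp,
    fun i ↦ ?_⟩
  by_cases hi : z i = √a
  · simp [hi]
  · simpa [hi] using (h i).resolve_left hi

lemma even_sum_of_forall_eq_one_or_neg_one {ι : Type*} {s : Finset ι} {f : ι → ℤ}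
    (hf : ∀ i ∈ s, f i = 1 ∨ f i = -1) (hs : Even #s) : Even (∑ i ∈ s, f i) := by
  have h : ∑ i ∈ s, f i = #s - ∑ i ∈ s, (1 - f i) := by simp [sum_sub_distrib]
  rw [h]
  refine (Int.even_coe_nat _ |>.mpr hs).sub (even_sum _ fun i hi ↦ ?_)
  rcases hf i hi with h | h <;> simp [h]

namespace Int

lemma dvd_of_sq_mul_eq {ℓ x r : ℤ} (h : ℓ ^ 2 * r = (ℓ ^ 2 - x) * x) : ℓ ∣ x :=
  (Int.pow_dvd_pow_iff two_ne_zero).mp ⟨x - r, by linear_combination h⟩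

lemma two_mul_dvd_of_sq_mul_eq {ℓ x r : ℤ} (h : ℓ ^ 2 * r = (ℓ ^ 2 - x) * x)
    (hℓ : Even ℓ) (hr : Even r) : 2 * ℓ ∣ x := by
  obtain ⟨s, rfl⟩ := dvd_of_sq_mul_eq h
  rcases eq_or_ne ℓ 0 with rfl | hℓ0
  · simp
  have hs : s ^ 2 = ℓ * s - r :=
    mul_left_cancel₀ (pow_ne_zero 2 hℓ0) (by linear_combination h)
  obtain ⟨t, rfl⟩ := (Int.even_pow.mp (hs ▸ (hℓ.mul_right s).sub hr)).1.two_dvd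
  exact ⟨t, by ring⟩

end Int

lemma Nat.isSquare_of_mul_sq_eq_sq {L : ℕ} {s k : ℤ} (hs : s ≠ 0)
    (h : (L : ℤ) * s ^ 2 = k ^ 2) : IsSquare L := by
  refine Rat.isSquare_natCast_iff.mp ⟨k / s, ?_⟩
  rw [← sq, div_pow, eq_div_iff (by positivity)]
  exact_mod_cast h

lemma isSquare_of_trace_of_pair {L n d : ℕ} {S R : ℤ} (hn : n ≠ 0)
    (hL : (L : ℤ) = d ^ 2 + n - 1) (htrace : (L : ℤ) * S ^ 2 = (n * d) ^ 2)
    (hpair : (L : ℤ) * R = n * (d ^ 2 - 1)) : IsSquare L := by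
  rcases eq_or_ne d 0 with rfl | hd
  · have hL1 : (L : ℤ) ∣ 1 := ⟨-(R + 1), by
      push_cast at hL hpair
      linear_combination hpair + hL⟩
    rw [show L = 1 by exact_mod_cast Int.eq_one_of_dvd_one (by positivity) hL1]
    exact IsSquare.one
  · refine Nat.isSquare_of_mul_sq_eq_sq (fun hS ↦ ?_) htrace
    rw [hS, zero_pow two_ne_zero, mul_zero] at htrace
    exact pow_ne_zero 2 (by positivity) htrace.symm

lemma exists_sq_eq_dvd_of_trace_of_pair {L n d : ℕ} {S R : ℤ} (hn : n ≠ 0) (hne : Even n)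
    (hL : (L : ℤ) = d ^ 2 + n - 1) (hR : Even R)
    (htrace : (L : ℤ) * S ^ 2 = (n * d) ^ 2) (hpair : (L : ℤ) * R = n * (d ^ 2 - 1)) :
    ∃ ℓ : ℕ, ℓ ^ 2 = L ∧ (ℓ : ℤ) ∣ (d : ℤ) ^ 2 - 1 ∧
      (Odd d → (2 * ℓ : ℤ) ∣ (d : ℤ) ^ 2 - 1) := by
  obtain ⟨ℓ, hℓ⟩ := isSquare_of_trace_of_pair hn hL htrace hpair
  have hℓL : (ℓ : ℤ) ^ 2 = L := by rw [hℓ]; push_cast; ring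
  have hX : (ℓ : ℤ) ^ 2 * R = ((ℓ : ℤ) ^ 2 - (d ^ 2 - 1)) * (d ^ 2 - 1) := by
    rw [hℓL, hpair, hL]; ring
  refine ⟨ℓ, by rw [sq, ← hℓ], Int.dvd_of_sq_mul_eq hX,
    fun hd ↦ Int.two_mul_dvd_of_sq_mul_eq hX ?_ hR⟩
  have hℓ2 : Even ((ℓ : ℤ) ^ 2) := by
    rw [hℓL, hL]
    have hd2 : Odd ((d : ℤ) ^ 2) := ((Int.odd_coe_nat d).mpr hd).pow
    exact (hd2.add_even ((Int.even_coe_nat n).mpr hne)).sub_odd odd_one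
  exact (Int.even_pow.mp hℓ2).1

section Circulant

variable {n : ℕ} {c : ZMod n → ℂ} {C : Matrix (ZMod n) (ZMod n) ℂ}

lemma conj_apply_eq_apply_neg (hC : ∀ j k, C j k = c (k - j)) (hH : C.IsHermitian)
    (x : ZMod n) : conj (c x) = c (-x) := by
  simpa [hC] using congrFun (congrFun hH.eq x) 0

variable [NeZero n]

lemma sum_mul_apply_sub_eq_ite (hC : ∀ j k, C j k = c (k - j)) (hH : C.IsHermitian) {a : ℂ}
    (h : C * Cᴴ = a • 1) (t : ZMod n) : ∑ j, c j * c (t - j) = if t = 0 then a else 0 := by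
  have h0t := congrFun (congrFun h 0) t
  rw [hH.eq, mul_apply] at h0t
  simpa [hC, one_apply, eq_comm] using h0t

lemma sum_dft_mul_dft_add_one [Fact (1 < n)] (hconj : ∀ x, conj (c x) = c (-x))
    (hunit : ∀ j : ZMod n, j ≠ 0 → ‖c j‖ = 1) :
    ∑ k, 𝓕 c k * 𝓕 c (k + 1) = n * (c 0 ^ 2 - 1) := by
  have h j : c j * c (-j) = (if j = 0 then c 0 ^ 2 - 1 else 0) + 1 := by
    rcases eq_or_ne j 0 with rfl | hj
    · simp [sq]
    · rw [← hconj, mul_conj', hunit j hj]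
      simp [hj]
  simp [sum_dft_mul_dft_add, h, add_mul, sum_add_distrib, sum_stdAddChar]

lemma exists_sign_trace_pair [Fact (1 < n)] {d L : ℕ} (hC : ∀ j k, C j k = c (k - j))
    (hH : C.IsHermitian) (h : C * Cᴴ = ((L : ℝ) : ℂ) • 1) (hc0 : c 0 = d)
    (hunit : ∀ j : ZMod n, j ≠ 0 → ‖c j‖ = 1) :
    ∃ ε : ZMod n → ℤ, (∀ k, ε k = 1 ∨ ε k = -1) ∧
      (L : ℤ) * (∑ k, ε k) ^ 2 = (n * d) ^ 2 ∧
      (L : ℤ) * ∑ k, ε k * ε (k + 1) = n * (d ^ 2 - 1) := by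
  obtain ⟨ε, hε, heig⟩ := exists_sign_mul_sqrt L.cast_nonneg
    (dft_sq_of_sum_mul_apply_sub (sum_mul_apply_sub_eq_ite hC hH h))
  have hsqrt : ((√(L : ℝ) : ℂ)) ^ 2 = L := by
    rw [← ofReal_pow, Real.sq_sqrt L.cast_nonneg, ofReal_natCast]
  refine ⟨ε, hε, ?_, ?_⟩
  · have htrace := sum_dft c
    simp only [heig, ← sum_mul, hc0] at htrace
    have h2 : (((L : ℤ) * (∑ k, ε k) ^ 2 : ℤ) : ℂ) = (((n * d) ^ 2 : ℤ) : ℂ) := by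
      push_cast; rw [← htrace, mul_pow, hsqrt]; ring
    exact_mod_cast h2
  · have hpair := sum_dft_mul_dft_add_one (conj_apply_eq_apply_neg hC hH) hunit
    simp only [heig, hc0] at hpair
    have h2 : (((L : ℤ) * ∑ k, ε k * ε (k + 1) : ℤ) : ℂ) = ((n * (d ^ 2 - 1) : ℤ) : ℂ) := by
      push_cast
      rw [← hpair, mul_sum]
      exact sum_congr rfl fun k _ ↦ by rw [← hsqrt]; ring
    exact_mod_cast h2

end Circulant

theorem stmt7 (n : ℕ) [NeZero n] (hn : 2 ≤ n) (hne : Even n)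
    (c : ZMod n → ℂ) (C : Matrix (ZMod n) (ZMod n) ℂ)
    (hC : ∀ j k, C j k = c (k - j))
    (d : ℕ)  (hc0 : c 0 = (d : ℂ))
    (hunit : ∀ j : ZMod n, j ≠ 0 → ‖c j‖ = 1)
    (hHerm : C.IsHermitian)
    (horth : C * C.conjTranspose = (((d : ℝ) ^ 2 + n - 1 : ℝ) : ℂ) • 1)
     :
    ∃ ℓ : ℕ, ℓ ^ 2 = d ^ 2 + n - 1 ∧ (ℓ : ℤ) ∣ ((d : ℤ) ^ 2 - 1) ∧ (Odd d → (2 * ℓ : ℤ) ∣ ((d : ℤ) ^ 2 - 1)) := by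
  have : Fact (1 < n) := ⟨hn⟩
  have hL : 1 ≤ d ^ 2 + n := by omega
  rw [show ((d : ℝ) ^ 2 + n - 1 : ℝ) = (d ^ 2 + n - 1 : ℕ) by push_cast [Nat.cast_sub hL]; ring]
    at horth
  obtain ⟨ε, hε, htrace, hpair⟩ := exists_sign_trace_pair hC hHerm horth hc0 hunit
  have hR : Even (∑ k, ε k * ε (k + 1)) := by
    refine even_sum_of_forall_eq_one_or_neg_one (fun k _ ↦ ?_) (by simpa using hne)
    rcases hε k with h | h <;> rcases hε (k + 1) with h' | h' <;> simp [h, h']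
  exact exists_sq_eq_dvd_of_trace_of_pair (by omega) hne (by push_cast [Nat.cast_sub hL]; ring)
    hR htrace hpair
end

section
/- A Hermitian circulant conference matrix of even order n ≥ 2 exists only for n = 2. That is, if C is an n×n Hermitian circulant matrix with n even, diagonal entries 0, off-diagonal entries of absolute value 1, and C C* = (n − 1) I, then n = 2. -/
/-!
Put `q = √(n - 1)` and let `P` be the cyclic shift by `n / 2`. Since `C` is Hermitian,
`C² = q² I`, so `q⁻¹ C` is an involution; `P` is an involution commuting with the circulant `C`,
hence `q⁻¹ C P` is an involution too. The trace of an involution `X` is an integer, because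
`(1 + X) / 2` is idempotent and the trace of an idempotent is its rank. So `tr (C P) = q m` with
`m ∈ ℤ`, while directly `tr (C P) = n c(n / 2)` has absolute value `n`. Thus `n² = (n - 1) m²`,
so `n - 1` divides `n² - (n - 1)(n + 1) = 1`.
-/

open Matrix Complex

namespace Matrix

variable {K ι : Type*} [Field K] [Fintype ι] [DecidableEq ι]

theorem exists_trace_eq_natCast_of_isIdempotentElem {E : Matrix ι ι K}
    (hE : IsIdempotentElem E) : ∃ r : ℕ, E.trace = r :=
  ⟨_, by
    rw [← trace_toLin'_eq]
    exact (LinearMap.IsIdempotentElem.isProj_range _ (hE.map toLinAlgEquiv')).trace⟩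

theorem exists_trace_eq_intCast_of_mul_self_eq_one [NeZero (2 : K)] {X : Matrix ι ι K}
    (hX : X * X = 1) : ∃ m : ℤ, X.trace = m := by
  have hE : IsIdempotentElem ((2⁻¹ : K) • (1 + X)) := by
    have h2 : (2 : K) ≠ 0 := two_ne_zero
    rw [IsIdempotentElem, smul_mul_smul, add_mul, mul_add, mul_add, hX, one_mul, one_mul, mul_one,
      show (1 : Matrix ι ι K) + X + (X + 1) = (2 : K) • (1 + X) by module, smul_smul]
    field_simp
  obtain ⟨r, hr⟩ := exists_trace_eq_natCast_of_isIdempotentElem hE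
  refine ⟨2 * r - Fintype.card ι, ?_⟩
  rw [trace_smul, trace_add, trace_one, smul_eq_mul] at hr
  push_cast
  rw [← hr]
  field_simp
  ring

theorem exists_trace_mul_eq_mul_intCast [NeZero (2 : K)] {A P : Matrix ι ι K} {q : K}
    (hq : q ≠ 0) (hA : A * A = q ^ 2 • 1) (hP : P * P = 1) (hAP : Commute A P) :
    ∃ m : ℤ, (A * P).trace = q * m := by
  have hB : q⁻¹ • A * (q⁻¹ • A) = 1 := by
    rw [smul_mul_smul, hA, smul_smul, ← pow_two, ← mul_pow, inv_mul_cancel₀ hq, one_pow, one_smul]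
  have hX : q⁻¹ • A * P * (q⁻¹ • A * P) = 1 := by
    rw [← sq, (hAP.smul_left q⁻¹).mul_pow, sq, sq, hB, hP, one_mul]
  obtain ⟨m, hm⟩ := exists_trace_eq_intCast_of_mul_self_eq_one hX
  refine ⟨m, ?_⟩
  rw [smul_mul_assoc, trace_smul, smul_eq_mul] at hm
  rw [← hm, mul_inv_cancel_left₀ hq]

section Circulant

variable {α n : Type*} [Semiring α] [DecidableEq n] [AddGroup n] [Fintype n]

theorem circulant_single_one_mul (a b : n) :
    circulant (Pi.single a (1 : α)) * circulant (Pi.single b 1) =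
      circulant (Pi.single (a + b) 1) := by
  ext i j
  simp only [mul_apply, circulant_apply, Pi.single_apply, mul_ite, mul_one, mul_zero,
    sub_eq_iff_eq_add, Finset.sum_ite_eq', Finset.mem_univ, if_true, add_assoc]

theorem trace_circulant_mul_circulant_single_one (v : n → α) (a : n) :
    (circulant v * circulant (Pi.single a 1)).trace = Fintype.card n • v (-a) := by
  simp [trace, mul_apply, circulant_apply, Pi.single_apply, sub_eq_iff_eq_add]

end Circulant

end Matrix

theorem ZMod.exists_ne_zero_add_self_eq_zero_s9 {n : ℕ} [NeZero n] (hn : Even n) :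
    ∃ h : ZMod n, h ≠ 0 ∧ h + h = 0 := by
  obtain ⟨k, rfl⟩ := hn
  refine ⟨k, fun hk => ?_, by rw [← Nat.cast_add, ZMod.natCast_self]⟩
  have hk0 : k + k ≠ 0 := NeZero.ne _
  have := Nat.eq_zero_of_dvd_of_lt ((ZMod.natCast_eq_zero_iff _ _).mp hk) (by omega)
  omega

theorem Int.eq_two_of_sq_eq_sub_one_mul_sq {n m : ℤ} (hn : n ≠ 0) (h : n ^ 2 = (n - 1) * m ^ 2) :
    n = 2 := by
  have hdvd : n - 1 ∣ 1 := by
    have := dvd_sub (Dvd.intro _ h.symm) (Dvd.intro (n + 1) (by ring) : n - 1 ∣ n ^ 2 - 1)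
    rwa [sub_sub_cancel] at this
  rcases Int.isUnit_iff.mp (isUnit_of_dvd_one hdvd) with h1 | h1 <;> omega

theorem stmt9_general (n : ℕ) [NeZero n] (hne : Even n)
    (c : ZMod n → ℂ) (C : Matrix (ZMod n) (ZMod n) ℂ)
    (hC : ∀ j k, C j k = c (k - j))
    (hunit : ∀ j : ZMod n, j ≠ 0 → ‖c j‖ = 1)
    (hHerm : C.IsHermitian)
    (horth : C * C.conjTranspose = ((n - 1 : ℝ) : ℂ) • 1) :
    n = 2 := by
  obtain ⟨h, hh0, hhh⟩ := ZMod.exists_ne_zero_add_self_eq_zero_s9 hne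
  have hCcirc : C = circulant fun i => c (-i) := by
    ext j k
    rw [hC, circulant_apply, neg_sub]
  have hn1 : (1 : ℝ) ≤ n := by exact_mod_cast Nat.one_le_iff_ne_zero.mpr (NeZero.ne n)
  obtain ⟨q, hq⟩ := IsAlgClosed.exists_pow_nat_eq (((n - 1 : ℝ)) : ℂ) two_pos
  have hq0 : q ≠ 0 := by
    rintro rfl
    rw [zero_pow two_ne_zero, eq_comm, ofReal_eq_zero, sub_eq_zero] at hq
    exact Nat.not_even_one (Nat.cast_eq_one.mp hq ▸ hne)
  obtain ⟨m, hm⟩ := exists_trace_mul_eq_mul_intCast (P := circulant (Pi.single h 1)) hq0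
    (by rw [hq, ← horth, hHerm.eq])
    (by rw [circulant_single_one_mul, hhh, circulant_single_one])
    (by rw [hCcirc]; exact circulant_mul_comm _ _)
  rw [hCcirc, trace_circulant_mul_circulant_single_one, neg_neg, ZMod.card, nsmul_eq_mul] at hm
  have hnorm := congrArg (fun z : ℂ => ‖z‖ ^ 2) hm
  simp only [norm_mul, mul_pow, norm_natCast, hunit h hh0, ← norm_pow, hq, norm_real,
    Real.norm_eq_abs, abs_of_nonneg (sub_nonneg.mpr hn1), norm_intCast, sq_abs, mul_one] at hnorm
  exact_mod_cast Int.eq_two_of_sq_eq_sub_one_mul_sq (n := n) (m := m) (mod_cast NeZero.ne n)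
    (mod_cast hnorm)

theorem stmt9 (n : ℕ) [NeZero n] (hn : 2 ≤ n) (hne : Even n)
    (c : ZMod n → ℂ) (C : Matrix (ZMod n) (ZMod n) ℂ)
    (hC : ∀ j k, C j k = c (k - j))
    (hc0 : c 0 = 0)
    (hunit : ∀ j : ZMod n, j ≠ 0 → ‖c j‖ = 1)
    (hHerm : C.IsHermitian)
    (horth : C * C.conjTranspose = ((n - 1 : ℝ) : ℂ) • 1) :
    n = 2 :=
  stmt9_general n hne c C hC hunit hHerm horth
end

section
/- If there exists an n×n Hermitian circulant complex Hadamard matrix with n even (all entries of absolute value 1, H H* = n I), then n is the square of an even integer. -/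
/-!
`H` is Hermitian with `H ^ 2 = n • 1`, so each of its eigenvalues is `±√n` and the trace is
`m √n` for an integer `m` of the same parity as `n`. On the other hand the trace of a circulant
matrix is `n c₀`, of modulus `n`. Hence `|m| √n = n`, so `n = m ^ 2` with `m` even.
-/

open Matrix Finset

theorem Matrix.IsHermitian.eigenvalues_sq_eq {𝕜 ι : Type*} [RCLike 𝕜] [Fintype ι]
    [DecidableEq ι] {A : Matrix ι ι 𝕜} (hA : A.IsHermitian) {r : ℝ}
    (h : A ^ 2 = algebraMap ℝ _ r) (i : ι) : hA.eigenvalues i ^ 2 = r := by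
  have : Nonempty ι := ⟨i⟩
  have := spectrum.pow_mem_pow A 2 (hA.eigenvalues_mem_spectrum_real i)
  rwa [h, spectrum.scalar_eq, Set.mem_singleton_iff] at this

theorem Matrix.trace_eq_card_nsmul_of_apply_eq_sub {G R : Type*} [AddGroup G] [Fintype G]
    [AddCommMonoid R] {c : G → R} {A : Matrix G G R} (hA : ∀ j k, A j k = c (k - j)) :
    A.trace = Fintype.card G • c 0 := by
  simp [trace, hA]

theorem exists_int_sum_eq_mul_sqrt_of_sq_eq {ι : Type*} (s : Finset ι) {x : ι → ℝ} {a : ℝ}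
    (hx : ∀ i ∈ s, x i ^ 2 = a) : ∃ m : ℤ, ∑ i ∈ s, x i = m * √a ∧ Even (m + #s) := by
  classical
  induction s using Finset.induction_on with
  | empty => exact ⟨0, by simp⟩
  | insert i s hi ih =>
    obtain ⟨m, hsum, hpar⟩ := ih fun j hj => hx j (mem_insert_of_mem hj)
    have hxi := hx i (mem_insert_self i s)
    have ha : 0 ≤ a := hxi ▸ sq_nonneg (x i)
    rw [sum_insert hi, card_insert_of_notMem hi, hsum]
    rcases sq_eq_sq_iff_eq_or_eq_neg.1 (hxi.trans (Real.sq_sqrt ha).symm) with h | h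
    · refine ⟨m + 1, by rw [h]; push_cast; ring, ?_⟩
      rw [show m + 1 + ((#s + 1 : ℕ) : ℤ) = m + #s + 2 by push_cast; ring]
      exact hpar.add even_two
    · refine ⟨m - 1, by rw [h]; push_cast; ring, ?_⟩
      rwa [show m - 1 + ((#s + 1 : ℕ) : ℤ) = m + #s by push_cast; ring]

theorem sq_eq_of_natCast_eq_abs_mul_sqrt {m : ℤ} {n : ℕ} (hn : n ≠ 0)
    (h : (n : ℝ) = |(m : ℝ)| * √n) : (n : ℤ) = m ^ 2 := by
  have hsqrt : √(n : ℝ) ≠ 0 := by positivity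
  have hm : √(n : ℝ) = |(m : ℝ)| :=
    mul_right_cancel₀ hsqrt (by rw [Real.mul_self_sqrt (Nat.cast_nonneg n), ← h])
  have : (n : ℝ) = (m : ℝ) ^ 2 := by rw [← Real.sq_sqrt (Nat.cast_nonneg n), hm, sq_abs]
  exact_mod_cast this

theorem stmt10_general (n : ℕ) [NeZero n] (hne : Even n)
    (c : ZMod n → ℂ) (H : Matrix (ZMod n) (ZMod n) ℂ)
    (hH : ∀ j k, H j k = c (k - j))
    (hunit : ∀ j : ZMod n, ‖c j‖ = 1)
    (hHerm : H.IsHermitian)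
    (horth : H * H.conjTranspose = (n : ℂ) • 1) :
    ∃ k : ℕ, Even k ∧ n = k ^ 2 := by
  have hsq : H ^ 2 = algebraMap ℝ _ (n : ℝ) := by
    rw [hHerm.eq] at horth
    rw [sq, horth, Algebra.algebraMap_eq_smul_one, Nat.cast_smul_eq_nsmul, Nat.cast_smul_eq_nsmul]
  obtain ⟨m, hsum, hpar⟩ := exists_int_sum_eq_mul_sqrt_of_sq_eq univ
    fun i _ => hHerm.eigenvalues_sq_eq hsq i
  have htrace : (n : ℂ) * c 0 = ((∑ i, hHerm.eigenvalues i : ℝ) : ℂ) := by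
    have htr := trace_eq_card_nsmul_of_apply_eq_sub hH
    rw [ZMod.card, nsmul_eq_mul, hHerm.trace_eq_sum_eigenvalues] at htr
    exact_mod_cast htr.symm
  have hn : (n : ℝ) = |(m : ℝ)| * √n := by
    simpa [hunit, hsum, abs_mul, abs_of_nonneg, Real.sqrt_nonneg] using congrArg norm htrace
  have hm : (n : ℤ) = m ^ 2 := sq_eq_of_natCast_eq_abs_mul_sqrt (NeZero.ne n) hn
  have hmeven : Even m := by
    rw [card_univ, ZMod.card] at hpar
    simpa using hpar.sub (Int.even_coe_nat n |>.2 hne)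
  refine ⟨m.natAbs, Int.natAbs_even.2 hmeven, ?_⟩
  zify
  rw [sq_abs]
  exact hm

theorem stmt10 (n : ℕ) [NeZero n] (hn : 2 ≤ n) (hne : Even n)
    (c : ZMod n → ℂ) (H : Matrix (ZMod n) (ZMod n) ℂ)
    (hH : ∀ j k, H j k = c (k - j))
    (hunit : ∀ j : ZMod n, ‖c j‖ = 1)
    (hHerm : H.IsHermitian)
    (horth : H * H.conjTranspose = (n : ℂ) • 1) :
    ∃ k : ℕ, Even k ∧ n = k ^ 2 :=
  stmt10_general n hne c H hH hunit hHerm horth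
end

section
/- Let C be a Hermitian n×n circulant matrix satisfying c₀ = d with d a nonnegative integer, |c_j| = 1 for j = 1,…,n−1, and C C* = (d² + n − 1) I. If n/2 = p·q is a product of two primes p, q, then n = 2d + 2. -/
open Matrix Complex

/-!
As `C` is Hermitian, `C * C = E • 1` with `E = d² + n - 1`; for a square root `s` of `E`, the
matrix `s⁻¹ • C` is an involution. The trace of an involution `U`, and of a product `U * V` of
commuting involutions, is an integer, because `(1 + U) / 2` is idempotent and the trace of an
idempotent is its rank. Twisting the first row of `C` by a nontrivial additive character `ψ`
gives a circulant `C'` conjugate to `C` by `diagonal ψ`, so `C' * C' = E • 1` and `C'` commutes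
with `C`. Since `tr C = n d` and `tr (C * C') = n ∑ |cᵢ|² ψ i = n (d² - 1)`, there are integers
`k, r` with `E k² = (n d)²` and `E r = n (d² - 1)`. For `d > 0` the first makes `E = e²` a square
and then the second gives `e ∣ n`; with `n = 2 p q` this forces `e = d + 1`, i.e. `n = 2 d + 2`.
-/

namespace Matrix

variable {K ι : Type*} [Field K] [Fintype ι] [DecidableEq ι]

theorem exists_trace_eq_natCast_of_isIdempotentElem_s12 {P : Matrix ι ι K}
    (hP : IsIdempotentElem P) : ∃ m : ℕ, P.trace = m :=
  ⟨_, (trace_toLin'_eq P).symm.trans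
    (LinearMap.IsIdempotentElem.isProj_range _ (hP.map toLinAlgEquiv')).trace⟩

variable [NeZero (2 : K)]

theorem isIdempotentElem_half_smul_one_add {U : Matrix ι ι K} (hU : U * U = 1) :
    IsIdempotentElem ((2 : K)⁻¹ • (1 + U)) := by
  rw [IsIdempotentElem, smul_mul_smul, add_mul, mul_add, mul_add, hU]
  ext i j
  simp only [smul_apply, add_apply, one_mul, mul_one, smul_eq_mul]
  field_simp
  ring

theorem exists_trace_mul_eq_intCast {U V : Matrix ι ι K} (hU : U * U = 1) (hV : V * V = 1)
    (hUV : Commute U V) : ∃ r : ℤ, (U * V).trace = r := by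
  have hP := isIdempotentElem_half_smul_one_add hU
  have hQ := isIdempotentElem_half_smul_one_add hV
  have hPQ : Commute ((2 : K)⁻¹ • (1 + U)) ((2 : K)⁻¹ • (1 + V)) :=
    (((Commute.one_left _).add_left ((Commute.one_right U).add_right hUV)).smul_left _).smul_right _
  obtain ⟨a, ha⟩ := exists_trace_eq_natCast_of_isIdempotentElem_s12 (hP.mul_of_commute hPQ hQ)
  obtain ⟨b, hb⟩ := exists_trace_eq_natCast_of_isIdempotentElem_s12 hP
  obtain ⟨c, hc⟩ := exists_trace_eq_natCast_of_isIdempotentElem_s12 hQ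
  refine ⟨4 * a - 2 * b - 2 * c + Fintype.card ι, ?_⟩
  simp only [smul_mul_smul, add_mul, mul_add, one_mul, mul_one, trace_smul, trace_add, trace_one,
    smul_eq_mul] at ha hb hc
  field_simp at ha hb hc
  push_cast
  linear_combination ha - hb - hc

theorem exists_trace_mul_eq_sq_mul_intCast {A B : Matrix ι ι K} {s : K} (hs : s ≠ 0)
    (hA : A * A = s ^ 2 • 1) (hB : B * B = s ^ 2 • 1) (hAB : Commute A B) :
    ∃ r : ℤ, (A * B).trace = s ^ 2 * r := by
  have hinv : ∀ M : Matrix ι ι K, M * M = s ^ 2 • 1 → s⁻¹ • M * s⁻¹ • M = 1 := fun M hM => by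
    rw [smul_mul_smul, hM, smul_smul]
    field_simp
    simp
  obtain ⟨r, hr⟩ := exists_trace_mul_eq_intCast (hinv A hA) (hinv B hB)
    ((hAB.smul_left _).smul_right _)
  refine ⟨r, ?_⟩
  rw [smul_mul_smul, trace_smul, smul_eq_mul] at hr
  field_simp at hr
  exact hr

theorem exists_trace_eq_mul_intCast {A : Matrix ι ι K} {s : K} (hs : s ≠ 0)
    (hA : A * A = s ^ 2 • 1) : ∃ k : ℤ, A.trace = s * k := by
  obtain ⟨k, hk⟩ := exists_trace_mul_eq_sq_mul_intCast hs hA (B := s • 1)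
    (by rw [smul_mul_smul, one_mul, sq]) ((Commute.one_right A).smul_right s)
  refine ⟨k, mul_left_cancel₀ hs ?_⟩
  rw [mul_smul_comm, mul_one, trace_smul, smul_eq_mul] at hk
  linear_combination hk

section Circulant

variable {α G : Type*} [AddCommGroup G] [Fintype G]

theorem trace_circulant [AddCommMonoid α] (v : G → α) :
    (circulant v).trace = Fintype.card G • v 0 := by
  simp [trace]

theorem trace_circulant_mul [NonUnitalNonAssocSemiring α] (v w : G → α) :
    (circulant v * circulant w).trace = Fintype.card G • ∑ i, v (-i) * w i := by
  simp [circulant_mul, trace_circulant, mulVec, dotProduct]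

variable [DecidableEq G] [CommRing α]

theorem circulant_addChar_mul_eq (ψ : AddChar G α) (v : G → α) :
    circulant (fun i => ψ i * v i) = diagonal ψ * circulant v * diagonal (fun i => ψ (-i)) := by
  ext i j
  simp [sub_eq_add_neg, AddChar.map_add_eq_mul]
  ring

theorem circulant_addChar_mul_mul_self (ψ : AddChar G α) {v : G → α} {a : α}
    (hv : circulant v * circulant v = a • 1) :
    circulant (fun i => ψ i * v i) * circulant (fun i => ψ i * v i) = a • 1 := by
  have hψ : diagonal (fun i => ψ (-i)) * diagonal ψ = 1 := by
    simp [← AddChar.map_add_eq_mul]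
  have hψ' : diagonal ψ * diagonal (fun i => ψ (-i)) = 1 := by
    simp [← AddChar.map_add_eq_mul]
  simp only [circulant_addChar_mul_eq, mul_assoc]
  rw [← mul_assoc _ (diagonal ψ), hψ, one_mul, ← mul_assoc (circulant v), hv, smul_mul_assoc,
    one_mul, mul_smul_comm, hψ']

end Circulant

end Matrix

theorem ZMod.stdAddChar_ne_one {n : ℕ} [NeZero n] (hn : n ≠ 1) :
    (ZMod.stdAddChar : AddChar (ZMod n) ℂ) ≠ 1 := fun h =>
  hn <| ZMod.one_eq_zero_iff.mp <|
    ZMod.injective_stdAddChar (by rw [h, AddChar.one_apply, AddChar.one_apply])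

theorem AddChar.sum_norm_sq_mul_eq {G : Type*} [AddCommGroup G] [Fintype G] [DecidableEq G]
    (ψ : AddChar G ℂ) (hψ : ψ ≠ 1) {v : G → ℂ} (hv : ∀ i ≠ 0, ‖v i‖ = 1) :
    ∑ i, (‖v i‖ : ℂ) ^ 2 * ψ i = ‖v 0‖ ^ 2 - 1 := by
  have hsum := AddChar.sum_eq_zero_of_ne_one hψ
  rw [← Finset.add_sum_erase _ _ (Finset.mem_univ 0)] at hsum ⊢
  rw [Finset.sum_congr rfl fun i hi => by rw [hv i (Finset.ne_of_mem_erase hi)]]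
  simp only [AddChar.map_zero_eq_one, ofReal_one, one_pow, one_mul, mul_one] at hsum ⊢
  linear_combination hsum

theorem Matrix.exists_int_of_isHermitian_circulant_mul_self {G : Type*} [AddCommGroup G]
    [Fintype G] [DecidableEq G] (ψ : AddChar G ℂ) (hψ : ψ ≠ 1) {v : G → ℂ} {a : ℂ} (ha : a ≠ 0)
    (hherm : (circulant v).IsHermitian) (hv : ∀ i ≠ 0, ‖v i‖ = 1)
    (hsq : circulant v * circulant v = a • 1) :
    ∃ k r : ℤ, a * k ^ 2 = (Fintype.card G * v 0) ^ 2 ∧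
      a * r = Fintype.card G * (‖v 0‖ ^ 2 - 1) := by
  obtain ⟨s, rfl⟩ := IsAlgClosed.exists_pow_nat_eq a two_pos
  have hs : s ≠ 0 := by rintro rfl; simp at ha
  obtain ⟨k, hk⟩ := exists_trace_eq_mul_intCast hs hsq
  obtain ⟨r, hr⟩ := exists_trace_mul_eq_sq_mul_intCast hs hsq
    (circulant_addChar_mul_mul_self ψ hsq) (circulant_mul_comm _ _)
  have hstar : ∀ i, v (-i) = star (v i) := fun i => by
    simpa using
      congrFun (circulant_injective (hherm.eq.symm.trans (conjTranspose_circulant v))) (-i)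
  have hnorm : ∀ i, v (-i) * (ψ i * v i) = (‖v i‖ : ℂ) ^ 2 * ψ i := fun i => by
    rw [hstar, mul_left_comm, star_def, conj_mul', mul_comm]
  rw [trace_circulant, nsmul_eq_mul] at hk
  rw [trace_circulant_mul, Finset.sum_congr rfl fun i _ => hnorm i,
    AddChar.sum_norm_sq_mul_eq ψ hψ hv, nsmul_eq_mul] at hr
  exact ⟨k, r, by rw [hk]; ring, hr.symm⟩

theorem Nat.prime_and_prime_of_mul_eq_mul {p q a b : ℕ} (hp : p.Prime) (hq : q.Prime)
    (h : a * b = p * q) (ha : a ≠ 1) (hb : b ≠ 1) : a.Prime ∧ b.Prime := by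
  rcases hp.dvd_mul.mp (Dvd.intro q h.symm) with ⟨a', rfl⟩ | ⟨b', rfl⟩
  · have hq' : (a' * b).Prime := by
      rw [mul_assoc, Nat.mul_left_cancel_iff hp.pos] at h
      rwa [h]
    rcases Nat.prime_mul_iff.mp hq' with ⟨-, rfl⟩ | ⟨hb', rfl⟩
    · exact absurd rfl hb
    · exact ⟨by rwa [mul_one], hb'⟩
  · have hq' : (a * b').Prime := by
      rw [mul_left_comm, Nat.mul_left_cancel_iff hp.pos] at h
      rwa [h]
    rcases Nat.prime_mul_iff.mp hq' with ⟨ha', rfl⟩ | ⟨-, rfl⟩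
    · exact ⟨ha', by rwa [mul_one]⟩
    · exact absurd rfl ha

theorem Nat.prime_and_exists_prime_of_mul_eq_two_mul_mul {p q e h : ℕ} (hp : p.Prime)
    (hq : q.Prime) (heh : e * h = 2 * (p * q)) (h2 : 2 ∣ h) (he : e ≠ 1) (hh : h ≠ 2) :
    e.Prime ∧ ∃ t, t.Prime ∧ h = 2 * t := by
  obtain ⟨t, rfl⟩ := h2
  have het : e * t = p * q := by
    rw [mul_left_comm] at heh
    exact Nat.mul_left_cancel two_pos heh
  obtain ⟨hpe, hpt⟩ := prime_and_prime_of_mul_eq_mul hp hq het he (by rintro rfl; exact hh rfl)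
  exact ⟨hpe, t, hpt, rfl⟩

/- If `e ≥ d + 2`, write `n = e h`; then `h ≥ 3`, so one of `e, h` is a prime and the other twice
a prime. An odd prime `e` divides `d² - 1 = e (e - h)` but exceeds `d + 1`. If instead `e = 2 s`,
then `d` is odd, so `8 ∣ d² - 1 = e (e - h)` with `e - h` odd, forcing `4 ∣ s`. -/
theorem eq_two_mul_add_two_of_dvd {n d e p q : ℕ} (hp : p.Prime) (hq : q.Prime)
    (hn : n = 2 * (p * q)) (hen : e ∣ n) (hsq : e ^ 2 + 1 = d ^ 2 + n) : n = 2 * d + 2 := by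
  obtain ⟨h, rfl⟩ := hen
  have hpq : 4 ≤ p * q := Nat.mul_le_mul hp.two_le hq.two_le
  have hde : d < e := by nlinarith
  rcases Nat.lt_or_ge e (d + 2) with hde1 | hde2
  · obtain rfl : e = d + 1 := by omega
    nlinarith
  exfalso
  have hd : d ≠ 0 := by
    rintro rfl
    have : e ∣ 1 := (Nat.dvd_add_right (dvd_pow_self e two_ne_zero)).mp ⟨h, by omega⟩
    rw [Nat.dvd_one.mp this] at hsq hn
    omega
  have hh3 : 3 ≤ h := by
    by_contra! hh
    nlinarith [Nat.mul_le_mul hde2 hde2, Nat.mul_le_mul_left e (show h ≤ 2 by omega)]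
  have he2 : e ≠ 2 := by
    rintro rfl
    interval_cases d <;> omega
  have hfac : d ^ 2 - 1 = e * (e - h) := by
    rw [Nat.mul_sub, ← sq]
    omega
  rcases Nat.prime_two.dvd_mul.mp (Dvd.intro _ hn.symm) with h2e | h2h
  · obtain ⟨hh, s, hs, rfl⟩ := Nat.prime_and_exists_prime_of_mul_eq_two_mul_mul hp hq
      (by rw [mul_comm, hn]) h2e (by omega) (by omega)
    have hodd : Odd (2 * s - h) :=
      Nat.Even.sub_odd (by nlinarith) (even_two_mul s) (hh.odd_of_ne_two (by omega))
    have h8 : 8 ∣ 2 * s * (2 * s - h) := hfac ▸ Nat.eight_dvd_sq_sub_one_of_odd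
      (by simpa [parity_simps, Nat.odd_pow_iff] using congrArg Odd hsq)
    have h4 : 2 ^ 2 ∣ s := by
      refine (Nat.Coprime.pow_left 2 (Nat.coprime_two_left.mpr hodd)).dvd_of_dvd_mul_right ?_
      rw [mul_assoc] at h8
      exact (Nat.mul_dvd_mul_iff_left two_pos).mp h8
    obtain rfl := (Nat.prime_dvd_prime_iff_eq Nat.prime_two hs).mp (dvd_trans ⟨2, rfl⟩ h4)
    norm_num at h4
  · obtain ⟨he, t, -, rfl⟩ := Nat.prime_and_exists_prime_of_mul_eq_two_mul_mul hp hq hn h2h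
      (by omega) (by omega)
    have hd2 : Even d := by
      simpa [parity_simps, he.odd_of_ne_two he2] using congrArg Even hsq
    rcases he.dvd_mul.mp (Nat.sq_sub_sq d 1 ▸ Dvd.intro _ hfac.symm) with h | h
    · have := Nat.le_of_dvd (by omega) h
      omega
    · have := Nat.le_of_dvd (by obtain ⟨u, rfl⟩ := hd2; omega) h
      omega

theorem Int.exists_eq_natCast_sq_of_mul_sq_eq_sq {a k m : ℤ} (h : a * k ^ 2 = m ^ 2)
    (hm : m ≠ 0) : ∃ e : ℕ, a = e ^ 2 := by
  have hk : k ≠ 0 := by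
    rintro rfl
    exact hm (by simpa using h.symm)
  obtain ⟨t, rfl⟩ := (Int.pow_dvd_pow_iff two_ne_zero).mp (Dvd.intro_left _ h)
  refine ⟨t.natAbs, ?_⟩
  rw [Int.natCast_natAbs, sq_abs]
  exact mul_right_cancel₀ (pow_ne_zero 2 hk) (by rw [h]; ring)

theorem Int.dvd_of_sq_mul_eq_mul {e n D r : ℤ} (h : e ^ 2 * r = n * D) (hn : n + D = e ^ 2) :
    e ∣ n := by
  have hD : e ^ 2 ∣ D ^ 2 := ⟨D - r, by linear_combination h + D * hn⟩
  have := dvd_sub (dvd_pow_self e two_ne_zero) ((Int.pow_dvd_pow_iff two_ne_zero).mp hD)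
  rwa [← hn, add_sub_cancel_right] at this

theorem eq_two_mul_add_two_of_mul_sq_eq_sq {n d p q : ℕ} {k r : ℤ} (hp : p.Prime)
    (hq : q.Prime) (hn : n = 2 * (p * q)) (hk : ((d : ℤ) ^ 2 + n - 1) * k ^ 2 = (n * d) ^ 2)
    (hr : ((d : ℤ) ^ 2 + n - 1) * r = n * (d ^ 2 - 1)) : n = 2 * d + 2 := by
  have hpq : 4 ≤ p * q := Nat.mul_le_mul hp.two_le hq.two_le
  rcases Nat.eq_zero_or_pos d with rfl | hd
  · have := Int.eq_one_or_neg_one_of_mul_eq_neg_one (u := (n : ℤ) - 1) (v := r + 1)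
      (by linear_combination hr)
    omega
  have hn0 : 0 < n := by omega
  obtain ⟨e, he⟩ := Int.exists_eq_natCast_sq_of_mul_sq_eq_sq hk (by positivity)
  refine eq_two_mul_add_two_of_dvd hp hq hn (Int.natCast_dvd_natCast.mp ?_) (by zify; linarith)
  exact Int.dvd_of_sq_mul_eq_mul (he ▸ hr) (by rw [← he]; ring)

theorem stmt12_general (n : ℕ) [NeZero n] (hne : Even n)
    (c : ZMod n → ℂ) (C : Matrix (ZMod n) (ZMod n) ℂ)
    (hC : ∀ j k, C j k = c (k - j))
    (d : ℕ)  (hc0 : c 0 = (d : ℂ))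
    (hunit : ∀ j : ZMod n, j ≠ 0 → ‖c j‖ = 1)
    (hHerm : C.IsHermitian)
    (horth : C * C.conjTranspose = (((d : ℝ) ^ 2 + n - 1 : ℝ) : ℂ) • 1)
    (p q : ℕ) (hp : Nat.Prime p) (hq : Nat.Prime q) (hpq : n / 2 = p * q) :
    n = 2 * d + 2 := by
  have hn : n = 2 * (p * q) := by
    obtain ⟨m, rfl⟩ := hne
    omega
  have hn2 : (2 : ℝ) ≤ n := by
    have := Nat.mul_le_mul hp.two_le hq.two_le
    exact_mod_cast (show 2 ≤ n by omega)
  have hE : (((d : ℝ) ^ 2 + n - 1 : ℝ) : ℂ) ≠ 0 := ofReal_ne_zero.mpr (by nlinarith)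
  obtain rfl : C = circulant fun i => c (-i) := by ext j k; simp [hC]
  obtain ⟨k, r, hk, hr⟩ := exists_int_of_isHermitian_circulant_mul_self ZMod.stdAddChar
    (ZMod.stdAddChar_ne_one (by omega)) hE hHerm (fun i hi => hunit _ (neg_ne_zero.mpr hi))
    (by simpa [hHerm.eq] using horth)
  simp only [ZMod.card, neg_zero, hc0, norm_natCast] at hk hr
  exact eq_two_mul_add_two_of_mul_sq_eq_sq hp hq hn (by exact_mod_cast hk) (by exact_mod_cast hr)

theorem stmt12 (n : ℕ) [NeZero n] (hn : 2 ≤ n) (hne : Even n)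
    (c : ZMod n → ℂ) (C : Matrix (ZMod n) (ZMod n) ℂ)
    (hC : ∀ j k, C j k = c (k - j))
    (d : ℕ)  (hc0 : c 0 = (d : ℂ))
    (hunit : ∀ j : ZMod n, j ≠ 0 → ‖c j‖ = 1)
    (hHerm : C.IsHermitian)
    (horth : C * C.conjTranspose = (((d : ℝ) ^ 2 + n - 1 : ℝ) : ℂ) • 1)
    (p q : ℕ) (hp : Nat.Prime p) (hq : Nat.Prime q) (hpq : n / 2 = p * q) :
    n = 2 * d + 2 :=
  stmt12_general n hne c C hC d hc0 hunit hHerm horth p q hp hq hpq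
end

section
/- Let C be a Hermitian n×n circulant matrix satisfying c₀ = d with d an integer, d ≥ 2, |c_j| = 1 for j = 1,…,n−1, and C C* = (d² + n − 1) I. If n/2 is a power of a prime, then n = 2d + 2. -/
/-!
For a primitive additive character `ψ` of `ZMod n`, the vectors `k ↦ ψ (t * k)` are eigenvectors
of the circulant `C`, with eigenvalues `λ t = ∑ j, c j * ψ (t * j)`. As `C` is Hermitian with
`C * Cᴴ = Q • 1`, `Q = d² + n - 1`, each `λ t` equals `ε t * √Q` for a sign `ε t = ±1`.
Orthogonality of characters gives `∑ λ t = n d` and `∑ λ t * λ (t + 1) = n (d² - 1)`,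
so `k = ∑ ε t` and `A = ∑ ε t * ε (t + 1)` satisfy `k² Q = (n d)²` and `A Q = n (d² - 1)`,
while `∏ ε t * ε (t + 1) = 1` forces `A ≡ n [ZMOD 4]`.

Elementary number theory turns these relations into `n = 2 q s` and `d² - 1 = q (q - 2 s)`.
If `q s = n / 2` is a prime power and `s > 1`, then `s ∣ q`, hence `q s ∣ (d - 1) (d + 1)`, and
since `gcd (d - 1) (d + 1) ∣ 2` this gives `q s ≤ 2 (d + 1)`, contradicting
`d² = q² - 2 q s + 1`. So `s = 1` and `q = d + 1`.
-/

open Matrix Complex Finset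

theorem exists_units_mul_sqrt_of_sq_eq {z : ℂ} {x : ℝ} (hx : 0 ≤ x) (h : z ^ 2 = x) :
    ∃ e : ℤˣ, z = (e : ℤ) * (√x : ℂ) := by
  have hsq : z ^ 2 = (√x : ℂ) ^ 2 := by rw [← ofReal_pow, Real.sq_sqrt hx, h]
  rcases sq_eq_sq_iff_eq_or_eq_neg.1 hsq with h | h
  · exact ⟨1, by simp [h]⟩
  · exact ⟨-1, by simp [h]⟩

theorem four_dvd_card_sub_sum_of_prod_eq_one {ι : Type*} [Fintype ι] (x : ι → ℤˣ)
    (h : ∏ i, x i = 1) : (4 : ℤ) ∣ Fintype.card ι - ∑ i, (x i : ℤ) := by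
  have htwo : ∀ u : ℤˣ, (2 : ℤ) ∣ 1 - u := fun u ↦ by
    rcases Int.units_eq_one_or u with rfl | rfl <;> decide
  have key : ∀ s : Finset ι,
      (4 : ℤ) ∣ ∑ i ∈ s, (1 - (x i : ℤ)) - (1 - ((∏ i ∈ s, x i : ℤˣ) : ℤ)) := by
    intro s
    induction s using Finset.cons_induction with
    | empty => simp
    | cons i s hi ih =>
      rw [sum_cons, prod_cons, Units.val_mul]
      set S := ∑ j ∈ s, (1 - (x j : ℤ))
      set P := ((∏ j ∈ s, x j : ℤˣ) : ℤ)
      obtain ⟨a, ha⟩ := htwo (x i)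
      obtain ⟨b, hb⟩ := htwo (∏ j ∈ s, x j)
      rw [show 1 - x i + S - (1 - x i * P) = S - (1 - P) + (1 - x i) * (1 - P) by ring]
      exact dvd_add ih ⟨a * b, by rw [ha, hb]; ring⟩
  simpa [h, sum_sub_distrib] using key univ

section Circulant

variable {R : Type*} [CommRing R] [Fintype R]

noncomputable def circulantEigenvalue (ψ : AddChar R ℂ) (c : R → ℂ) (t : R) : ℂ :=
  ∑ j, c j * ψ (t * j)

variable {ψ : AddChar R ℂ} {c : R → ℂ}

theorem mulVec_addChar_eq_circulantEigenvalue_smul {C : Matrix R R ℂ}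
    (hC : ∀ j k, C j k = c (k - j)) (t : R) :
    C *ᵥ (fun k ↦ ψ (t * k)) = circulantEigenvalue ψ c t • fun k ↦ ψ (t * k) := by
  ext j
  simp only [mulVec, dotProduct, hC, Pi.smul_apply, smul_eq_mul, circulantEigenvalue, sum_mul]
  refine Fintype.sum_equiv (Equiv.subRight j) _ _ fun k ↦ ?_
  rw [Equiv.subRight_apply, mul_assoc, ← AddChar.map_add_eq_mul, ← mul_add, sub_add_cancel]

theorem circulantEigenvalue_sq [DecidableEq R] {C : Matrix R R ℂ} {Q : ℂ}
    (hC : ∀ j k, C j k = c (k - j)) (hHerm : C.IsHermitian) (horth : C * Cᴴ = Q • 1) (t : R) :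
    circulantEigenvalue ψ c t ^ 2 = Q := by
  have h := congrArg (· *ᵥ fun k ↦ ψ (t * k)) horth
  simp only [hHerm.eq, ← mulVec_mulVec, mulVec_addChar_eq_circulantEigenvalue_smul hC,
    mulVec_smul, smul_mulVec, one_mulVec, smul_smul] at h
  simpa [sq] using congrFun h 0

theorem sum_circulantEigenvalue (hψ : ψ.IsPrimitive) :
    ∑ t, circulantEigenvalue ψ c t = Fintype.card R * c 0 := by
  classical
  simp only [circulantEigenvalue]
  rw [sum_comm]
  simp only [← mul_sum, AddChar.sum_mulShift _ hψ]
  simp [mul_comm]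

theorem sum_star_circulantEigenvalue_mul (hψ : ψ.IsPrimitive) (s : R) :
    ∑ t, star (circulantEigenvalue ψ c t) * circulantEigenvalue ψ c (t + s) =
      Fintype.card R * ∑ j, star (c j) * c j * ψ (j * s) := by
  classical
  have hterm : ∀ y x j, star (c y) * star (ψ (x * y)) * (c j * ψ ((x + s) * j)) =
      star (c y) * c j * ψ (j * s) * ψ (x * (j - y)) := fun y x j ↦ by
    rw [mul_sub, sub_eq_add_neg, AddChar.map_add_eq_mul, add_mul, AddChar.map_add_eq_mul,
      mul_comm s, AddChar.map_neg_eq_conj, starRingEnd_apply]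
    ring
  simp only [circulantEigenvalue, star_sum, star_mul', sum_mul_sum]
  rw [sum_comm]
  simp only [hterm]
  rw [sum_congr rfl fun y _ ↦ sum_comm]
  simp only [← mul_sum, AddChar.sum_mulShift _ hψ, sub_eq_zero, Nat.cast_ite, Nat.cast_zero,
    mul_ite, mul_zero, sum_ite_eq', mem_univ, if_true]
  rw [mul_sum]
  exact sum_congr rfl fun j _ ↦ mul_comm _ _

theorem sum_star_mul_self_mul_addChar (hψ : ψ.IsPrimitive) {s : R} (hs : s ≠ 0)
    (hc : ∀ j, j ≠ 0 → ‖c j‖ = 1) :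
    ∑ j, star (c j) * c j * ψ (j * s) = (‖c 0‖ : ℂ) ^ 2 - 1 := by
  classical
  have hterm : ∀ j, star (c j) * c j * ψ (j * s) =
      ψ (j * s) + if j = 0 then (‖c 0‖ : ℂ) ^ 2 - 1 else 0 := fun j ↦ by
    rw [star_def, conj_mul']
    rcases eq_or_ne j 0 with rfl | hj
    · simp
    · simp [hc j hj, hj]
  rw [sum_congr rfl fun j _ ↦ hterm j, sum_add_distrib, AddChar.sum_mulShift _ hψ]
  simp [hs]

variable {ε : R → ℤˣ} {Q : ℝ}

theorem sq_sum_sign_mul_eq (hψ : ψ.IsPrimitive) (hQ : 0 ≤ Q)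
    (hε : ∀ t, circulantEigenvalue ψ c t = (ε t : ℤ) * (√Q : ℂ)) :
    ((∑ t, (ε t : ℤ) : ℤ) : ℂ) ^ 2 * Q = (Fintype.card R * c 0) ^ 2 := by
  have h := sum_circulantEigenvalue (c := c) hψ
  simp only [hε, ← sum_mul] at h
  rw [← h, mul_pow, ← ofReal_pow, Real.sq_sqrt hQ, Int.cast_sum]

theorem sum_sign_mul_sign_add_mul_eq (hψ : ψ.IsPrimitive) (hQ : 0 ≤ Q)
    (hε : ∀ t, circulantEigenvalue ψ c t = (ε t : ℤ) * (√Q : ℂ)) (s : R) :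
    ((∑ t, (ε t * ε (t + s) : ℤ) : ℤ) : ℂ) * Q =
      Fintype.card R * ∑ j, star (c j) * c j * ψ (j * s) := by
  rw [← sum_star_circulantEigenvalue_mul hψ, Int.cast_sum, sum_mul]
  refine sum_congr rfl fun t _ ↦ ?_
  have hQ' : (√Q : ℂ) ^ 2 = Q := by rw [← ofReal_pow, Real.sq_sqrt hQ]
  simp only [hε, star_mul', star_def, conj_ofReal, map_intCast]
  push_cast
  linear_combination -((ε t : ℤ) : ℂ) * (ε (t + s) : ℤ) * hQ'

end Circulant

theorem Nat.Prime.pow_dvd_gcd_mul_or_of_pow_dvd_mul {p k a b : ℕ} (hp : p.Prime)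
    (h : p ^ k ∣ a * b) : p ^ k ∣ a.gcd b * a ∨ p ^ k ∣ a.gcd b * b := by
  rw [← Nat.dvd_gcd_mul_gcd_iff_dvd_mul] at h
  obtain ⟨i, -, hi⟩ := (Nat.dvd_prime_pow hp).1 (Nat.gcd_dvd_left (p ^ k) a)
  obtain ⟨j, -, hj⟩ := (Nat.dvd_prime_pow hp).1 (Nat.gcd_dvd_left (p ^ k) b)
  rcases le_total i j with hij | hji
  · have : (p ^ k).gcd a ∣ (p ^ k).gcd b := hi ▸ hj ▸ pow_dvd_pow p hij
    right
    exact h.trans (Nat.mul_dvd_mul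
      (Nat.dvd_gcd (Nat.gcd_dvd_right _ _) (this.trans (Nat.gcd_dvd_right _ _)))
      (Nat.gcd_dvd_right _ _))
  · have : (p ^ k).gcd b ∣ (p ^ k).gcd a := hj ▸ hi ▸ pow_dvd_pow p hji
    left
    rw [mul_comm] at h
    exact h.trans (Nat.mul_dvd_mul
      (Nat.dvd_gcd (this.trans (Nat.gcd_dvd_right _ _)) (Nat.gcd_dvd_right _ _))
      (Nat.gcd_dvd_right _ _))

theorem Nat.Prime.pow_le_two_mul_add_one_of_dvd_sq_sub_one {p k d : ℕ} (hp : p.Prime)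
    (hd : 2 ≤ d) (h : ((p ^ k : ℕ) : ℤ) ∣ (d : ℤ) ^ 2 - 1) : p ^ k ≤ 2 * (d + 1) := by
  have hcast : (((d - 1) * (d + 1) : ℕ) : ℤ) = (d : ℤ) ^ 2 - 1 := by
    push_cast [Nat.cast_sub (by omega : 1 ≤ d)]
    ring
  have hmul : p ^ k ∣ (d - 1) * (d + 1) := Int.natCast_dvd_natCast.1 (hcast ▸ h)
  have hgcd : (d - 1).gcd (d + 1) ∣ 2 := by
    have := Nat.dvd_sub (Nat.gcd_dvd_right (d - 1) (d + 1)) (Nat.gcd_dvd_left (d - 1) (d + 1))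
    rwa [show d + 1 - (d - 1) = 2 by omega] at this
  rcases hp.pow_dvd_gcd_mul_or_of_pow_dvd_mul hmul with h' | h'
  · exact (Nat.le_of_dvd (by omega) (h'.trans (mul_dvd_mul_right hgcd _))).trans (by omega)
  · exact Nat.le_of_dvd (by omega) (h'.trans (mul_dvd_mul_right hgcd _))

theorem exists_eq_two_mul_mul_of_sign_relations {n d : ℕ} {k A : ℤ} (hn : 0 < n) (hd : 0 < d)
    (hk : k ^ 2 * ((d : ℤ) ^ 2 + n - 1) = (n * d) ^ 2)
    (hA : A * ((d : ℤ) ^ 2 + n - 1) = n * ((d : ℤ) ^ 2 - 1)) (h4 : (4 : ℤ) ∣ n - A) :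
    ∃ q s : ℕ, n = 2 * q * s ∧ (d : ℤ) ^ 2 - 1 = q * (q - 2 * s) := by
  have hk0 : k ≠ 0 := by
    rintro rfl
    have := hk.symm
    simp at this
    omega
  obtain ⟨r, hr⟩ : IsSquare ((d : ℤ) ^ 2 + n - 1) := by
    rw [← Rat.isSquare_intCast_iff]
    have hkq : (k : ℚ) ≠ 0 := by exact_mod_cast hk0
    refine ⟨(n * d : ℚ) / k, ?_⟩
    rw [div_mul_div_comm, eq_div_iff (mul_ne_zero hkq hkq)]
    exact_mod_cast
      (by linear_combination hk : ((d : ℤ) ^ 2 + n - 1) * (k * k) = n * d * (n * d))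
  set q := r.natAbs
  have hq : (d : ℤ) ^ 2 + n - 1 = q ^ 2 := by rw [hr, sq, Int.natAbs_mul_self']
  have hq0 : (q : ℤ) ≠ 0 := by
    intro h0
    rw [h0] at hq
    have : (0 : ℤ) < n := by exact_mod_cast hn
    nlinarith
  obtain ⟨w, hw⟩ : (q : ℤ) ∣ (d : ℤ) ^ 2 - 1 := by
    rw [← Int.pow_dvd_pow_iff two_ne_zero]
    exact ⟨(d : ℤ) ^ 2 - 1 - A, by linear_combination hA + ((d : ℤ) ^ 2 - 1 - A) * hq⟩
  have hnq : (n : ℤ) = q * (q - w) := by linear_combination hq - hw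
  have hAw : A = (q - w) * w := mul_left_cancel₀ (pow_ne_zero 2 hq0) (by
    linear_combination hA - A * hq + n * hw + q * w * hnq)
  obtain ⟨s, hs⟩ : (2 : ℤ) ∣ q - w := by
    refine Int.prime_two.dvd_of_dvd_pow (n := 2) (dvd_trans (by norm_num : (2 : ℤ) ∣ 4) ?_)
    rwa [show ((q : ℤ) - w) ^ 2 = n - A by rw [hnq, hAw]; ring]
  have hs0 : 0 ≤ s := by
    have : (0 : ℤ) < q * (2 * s) := by rw [← hs, ← hnq]; exact_mod_cast hn
    nlinarith
  lift s to ℕ using hs0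
  refine ⟨q, s, ?_, by linear_combination hw - q * hs⟩
  exact_mod_cast (show (n : ℤ) = 2 * q * s by rw [hnq, hs]; ring)

theorem eq_one_and_eq_add_one_of_mul_eq_prime_pow {p m q s d : ℕ} (hp : p.Prime)
    (hqs : q * s = p ^ m) (hd : 2 ≤ d) (h : (d : ℤ) ^ 2 - 1 = q * (q - 2 * s)) :
    s = 1 ∧ q = d + 1 := by
  have hd' : (2 : ℤ) ≤ d := by exact_mod_cast hd
  have hs : s = 1 := by
    obtain ⟨a, -, hq⟩ := (Nat.dvd_prime_pow hp).1 (Dvd.intro _ hqs)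
    obtain ⟨b, -, hs⟩ := (Nat.dvd_prime_pow hp).1 (Dvd.intro_left _ hqs)
    by_contra hs1
    have hs2 : 2 ≤ s := by
      have : 0 < s := hs ▸ pow_pos hp.pos b
      omega
    have hlt : 2 * s < q := by
      have : (0 : ℤ) < q * (q - 2 * s) := by nlinarith
      have : (0 : ℤ) ≤ q := by positivity
      have : (2 * s : ℤ) < q := by nlinarith
      exact_mod_cast this
    obtain ⟨t, ht⟩ : s ∣ q := by
      rw [hq, hs]
      exact pow_dvd_pow p ((Nat.pow_lt_pow_iff_right hp.one_lt).1 (by omega)).le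
    have hdvd : ((p ^ m : ℕ) : ℤ) ∣ (d : ℤ) ^ 2 - 1 :=
      ⟨t - 2, by rw [h, ← hqs, ht]; push_cast; ring⟩
    have hle := hp.pow_le_two_mul_add_one_of_dvd_sq_sub_one hd hdvd
    rw [← hqs] at hle
    have hle' : (q * s : ℤ) ≤ 2 * (d + 1) := by exact_mod_cast hle
    have hs2' : (2 : ℤ) ≤ s := by exact_mod_cast hs2
    have hlt' : (2 * s : ℤ) < q := by exact_mod_cast hlt
    have hqd : (q : ℤ) ≤ d + 1 := by nlinarith
    nlinarith [mul_nonneg (sub_nonneg.2 hqd) (by linarith : (0 : ℤ) ≤ d + q - 3)]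
  subst hs
  refine ⟨rfl, ?_⟩
  have : ((q : ℤ) - 1 - d) * ((q : ℤ) - 1 + d) = 0 := by linear_combination -h
  have : (q : ℤ) = d + 1 := by
    rcases mul_eq_zero.1 this with h' | h'
    · linarith
    · nlinarith
  exact_mod_cast this

theorem stmt13_general (n : ℕ) [NeZero n] (hn : 2 ≤ n)
    (c : ZMod n → ℂ) (C : Matrix (ZMod n) (ZMod n) ℂ)
    (hC : ∀ j k, C j k = c (k - j))
    (d : ℕ) (hd2 : 2 ≤ d) (hc0 : c 0 = (d : ℂ))
    (hunit : ∀ j : ZMod n, j ≠ 0 → ‖c j‖ = 1)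
    (hHerm : C.IsHermitian)
    (horth : C * C.conjTranspose = (((d : ℝ) ^ 2 + n - 1 : ℝ) : ℂ) • 1)
    (p m : ℕ) (hp : Nat.Prime p) (hpm : n / 2 = p ^ m) :
    n = 2 * d + 2 := by
  have : Fact (1 < n) := ⟨hn⟩
  have hψ := ZMod.isPrimitive_stdAddChar n
  have hQ : (0 : ℝ) ≤ (d : ℝ) ^ 2 + n - 1 := by
    have : (2 : ℝ) ≤ n := by exact_mod_cast hn
    linarith [sq_nonneg (d : ℝ)]
  choose ε hε using fun t ↦ exists_units_mul_sqrt_of_sq_eq hQ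
    (circulantEigenvalue_sq (ψ := ZMod.stdAddChar) hC hHerm horth t)
  have htrace := sq_sum_sign_mul_eq hψ hQ hε
  have hshift := sum_sign_mul_sign_add_mul_eq hψ hQ hε 1
  rw [ZMod.card, hc0] at htrace
  rw [ZMod.card, sum_star_mul_self_mul_addChar hψ one_ne_zero hunit, hc0] at hshift
  have h4 := four_dvd_card_sub_sum_of_prod_eq_one (fun t ↦ ε t * ε (t + 1)) (by
    rw [prod_mul_distrib, Fintype.prod_equiv (Equiv.addRight 1) (fun t ↦ ε (t + 1)) ε
      fun _ ↦ rfl, ← sq, Int.units_sq])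
  rw [ZMod.card] at h4
  obtain ⟨q, s, rfl, hqs⟩ := exists_eq_two_mul_mul_of_sign_relations (n := n) (d := d)
    (by omega) (by omega) (by exact_mod_cast htrace) (by exact_mod_cast hshift) (by simpa using h4)
  obtain ⟨rfl, rfl⟩ := eq_one_and_eq_add_one_of_mul_eq_prime_pow hp
    (by rw [← hpm, mul_assoc, Nat.mul_div_cancel_left _ two_pos]) hd2 hqs
  ring

theorem stmt13 (n : ℕ) [NeZero n] (hn : 2 ≤ n) (hne : Even n)
    (c : ZMod n → ℂ) (C : Matrix (ZMod n) (ZMod n) ℂ)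
    (hC : ∀ j k, C j k = c (k - j))
    (d : ℕ) (hd2 : 2 ≤ d) (hc0 : c 0 = (d : ℂ))
    (hunit : ∀ j : ZMod n, j ≠ 0 → ‖c j‖ = 1)
    (hHerm : C.IsHermitian)
    (horth : C * C.conjTranspose = (((d : ℝ) ^ 2 + n - 1 : ℝ) : ℂ) • 1)
    (p m : ℕ) (hp : Nat.Prime p) (hpm : n / 2 = p ^ m) :
    n = 2 * d + 2 :=
  stmt13_general n hn c C hC d hd2 hc0 hunit hHerm horth p m hp hpm
end

section
/- Let d ≥ 2 be an integer, p an odd prime (p ≥ 3), and m, j nonnegative integers such that p^{2j} − 2p^m = d² − 1. Then p^m divides d − 1 or p^m divides d + 1; in particular p^m ≤ d + 1. -/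
/-! Since `p ^ m ≤ p ^ (2 * j)`, the equation shows `p ^ m ∣ (d - 1) * (d + 1)`. An odd prime
cannot divide both factors, whose difference is `2`, so the whole prime power divides one of them,
and a positive multiple of `p ^ m` is at least `p ^ m`. -/

theorem Prime.pow_dvd_or_pow_dvd_of_dvd_mul {M : Type*} [CommMonoidWithZero M]
    [IsCancelMulZero M] {p a b : M} (hp : Prime p) (n : ℕ) (hab : ¬(p ∣ a ∧ p ∣ b))
    (h : p ^ n ∣ a * b) : p ^ n ∣ a ∨ p ^ n ∣ b := by
  by_cases ha : p ∣ a
  · exact .inl (hp.pow_dvd_of_dvd_mul_right n (fun hb => hab ⟨ha, hb⟩) h)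
  · exact .inr (hp.pow_dvd_of_dvd_mul_left n ha h)

theorem Int.not_dvd_sub_one_and_add_one {p : ℤ} (hp : ¬p ∣ 2) (d : ℤ) :
    ¬(p ∣ d - 1 ∧ p ∣ d + 1) := fun ⟨h₁, h₂⟩ => hp (by simpa using dvd_sub h₂ h₁)

theorem Int.pow_dvd_sub_one_mul_add_one {q d : ℤ} (hq : 1 < q) {m j : ℕ}
    (h : q ^ (2 * j) - 2 * q ^ m = d ^ 2 - 1) : q ^ m ∣ (d - 1) * (d + 1) := by
  have hm : m ≤ 2 * j := by
    have : q ^ m ≤ q ^ (2 * j) := by nlinarith [one_le_pow₀ (M₀ := ℤ) (n := m) hq.le]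
    exact (pow_le_pow_iff_right₀ hq).mp this
  have hprod : (d - 1) * (d + 1) = q ^ (2 * j) - 2 * q ^ m := by rw [h]; ring
  rw [hprod]
  exact dvd_sub (pow_dvd_pow q hm) (dvd_mul_left _ 2)

theorem stmt15 (d : ℤ) (hd : 2 ≤ d) (p : ℕ) (hp : Nat.Prime p) (hp3 : 3 ≤ p)
    (m j : ℕ) (h : (p : ℤ) ^ (2 * j) - 2 * (p : ℤ) ^ m = d ^ 2 - 1) :
    ((p : ℤ) ^ m ∣ d - 1 ∨ (p : ℤ) ^ m ∣ d + 1) ∧ (p : ℤ) ^ m ≤ d + 1 := by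
  have hp2 : ¬(p : ℤ) ∣ 2 := fun h₂ => by have := Int.le_of_dvd two_pos h₂; omega
  have hdvd := Int.pow_dvd_sub_one_mul_add_one (by exact_mod_cast hp.one_lt) h
  have hdisj := (Nat.prime_iff_prime_int.mp hp).pow_dvd_or_pow_dvd_of_dvd_mul m
    (Int.not_dvd_sub_one_and_add_one hp2 d) hdvd
  refine ⟨hdisj, ?_⟩
  rcases hdisj with h₁ | h₁
  · linarith [Int.le_of_dvd (by linarith) h₁]
  · exact Int.le_of_dvd (by linarith) h₁
end

section
/- Let d ≥ 2 be an integer and m, j nonnegative integers such that 2^{2j} − 2^{m+1} = d² − 1 with d² − 1 > 0. Then 2^m divides d − 1 or 2^m divides d + 1; in particular 2^m ≤ d + 1. -/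
theorem Int.two_pow_dvd_or_two_pow_dvd_succ_of_dvd_mul_succ {k : ℤ} (n : ℕ)
    (h : 2 ^ n ∣ k * (k + 1)) : 2 ^ n ∣ k ∨ 2 ^ n ∣ k + 1 :=
  Int.prime_two.pow_dvd_or_pow_dvd_of_dvd_mul n (by omega) h

theorem Int.two_pow_dvd_sub_one_or_add_one_of_two_pow_succ_dvd_sq_sub_one {d : ℤ} (m : ℕ)
    (h : 2 ^ (m + 1) ∣ d ^ 2 - 1) : 2 ^ m ∣ d - 1 ∨ 2 ^ m ∣ d + 1 := by
  obtain _ | n := m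
  · simp
  obtain ⟨k, rfl⟩ : Odd d := by
    have h2 : (2 : ℤ) ∣ d ^ 2 - 1 := (dvd_pow_self 2 (by omega)).trans h
    simpa [← even_iff_two_dvd, Int.even_sub_one, Int.even_pow, parity_simps] using h2
  have hk : (2 : ℤ) ^ n ∣ k * (k + 1) := by
    rw [show (2 * k + 1) ^ 2 - 1 = 2 ^ 2 * (k * (k + 1)) by ring, show n + 1 + 1 = 2 + n by ring,
      pow_add] at h
    exact (mul_dvd_mul_iff_left (by norm_num)).mp h
  rw [pow_succ', show 2 * k + 1 - 1 = 2 * k by ring, show 2 * k + 1 + 1 = 2 * (k + 1) by ring]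
  exact (Int.two_pow_dvd_or_two_pow_dvd_succ_of_dvd_mul_succ n hk).imp
    (mul_dvd_mul_left 2) (mul_dvd_mul_left 2)

theorem stmt16 (d : ℤ) (hd : 2 ≤ d) (m j : ℕ)
    (h : (2 : ℤ) ^ (2 * j) - 2 ^ (m + 1) = d ^ 2 - 1) (hpos : 0 < d ^ 2 - 1) :
    ((2 : ℤ) ^ m ∣ d - 1 ∨ (2 : ℤ) ^ m ∣ d + 1) ∧ (2 : ℤ) ^ m ≤ d + 1 := by
  have hmj : m + 1 ≤ 2 * j := by
    by_contra! hlt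
    have := pow_le_pow_right₀ (by norm_num : (1 : ℤ) ≤ 2) hlt.le
    linarith
  have hdvd : (2 : ℤ) ^ (m + 1) ∣ d ^ 2 - 1 :=
    h ▸ dvd_sub (pow_dvd_pow 2 hmj) dvd_rfl
  have key := Int.two_pow_dvd_sub_one_or_add_one_of_two_pow_succ_dvd_sq_sub_one m hdvd
  refine ⟨key, ?_⟩
  rcases key with hsub | hadd
  · linarith [Int.le_of_dvd (by omega) hsub]
  · exact Int.le_of_dvd (by omega) hadd
end

section
/- Let C = A + iB be a Hermitian circulant matrix of order n with real circulant matrices A, B, satisfying C C* = (d² + n − 1) I. Then A is symmetric, B is skew-symmetric, AB = 0, A² − B² = (d² + n − 1) I, and M := A + B is a real circulant matrix satisfying M Mᵀ = (d² + n − 1) I. -/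
/-!
Write `C = A + iB` with `A`, `B` real and `c = d² + n - 1`. Comparing real and imaginary parts
of `Cᴴ = C` gives `Aᵀ = A` and `Bᵀ = -B`, and those of `C * C = C * Cᴴ = c • 1` give
`A² - B² = c • 1` and `AB + BA = 0`. Circulant matrices commute, so `AB = 0`, and then
`(A + B)(A + B)ᵀ = (A + B)(A - B) = A² - B² = c • 1`.
-/

open Matrix Complex

namespace Matrix

variable {m : Type*}

def complexify (A B : Matrix m m ℝ) : Matrix m m ℂ :=
  A.map (fun x => (x : ℂ)) + Complex.I • B.map (fun x => (x : ℂ))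

@[simp]
theorem complexify_apply (A B : Matrix m m ℝ) (j k : m) :
    complexify A B j k = (A j k : ℂ) + Complex.I * (B j k : ℂ) := rfl

theorem complexify_inj {A B A' B' : Matrix m m ℝ} :
    complexify A B = complexify A' B' ↔ A = A' ∧ B = B' := by
  refine ⟨fun h => ⟨?_, ?_⟩, fun ⟨hA, hB⟩ => hA ▸ hB ▸ rfl⟩ <;> ext j k
  · simpa using congrArg Complex.re (congrFun (congrFun h j) k)
  · simpa using congrArg Complex.im (congrFun (congrFun h j) k)

theorem conjTranspose_complexify (A B : Matrix m m ℝ) :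
    (complexify A B)ᴴ = complexify Aᵀ (-Bᵀ) := by
  ext j k
  apply Complex.ext <;> simp

theorem ofReal_smul_one_eq_complexify [DecidableEq m] (c : ℝ) :
    (c : ℂ) • (1 : Matrix m m ℂ) = complexify (c • 1) 0 := by
  ext j k
  by_cases h : j = k <;> simp [h]

theorem complexify_mul [Fintype m] (A B A' B' : Matrix m m ℝ) :
    complexify A B * complexify A' B' = complexify (A * A' - B * B') (A * B' + B * A') := by
  ext j k
  apply Complex.ext <;> simp [mul_apply, Finset.sum_add_distrib, Finset.sum_sub_distrib]

theorem eq_circulant_of_apply_eq_sub {n α : Type*} [AddGroup n] {A : Matrix n n α}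
    {a : n → α} (hA : ∀ j k, A j k = a (k - j)) : A = circulant fun i => a (-i) := by
  ext j k
  simp [hA, circulant_apply]

end Matrix

theorem stmt17_general (n : ℕ) [NeZero n]
    (a b : ZMod n → ℝ) (A B : Matrix (ZMod n) (ZMod n) ℝ)
    (hA : ∀ j k, A j k = a (k - j)) (hB : ∀ j k, B j k = b (k - j))
    (C : Matrix (ZMod n) (ZMod n) ℂ)
    (hC : C = A.map (fun x => (x : ℂ)) + Complex.I • B.map (fun x => (x : ℂ)))
    (d : ℝ) (hHerm : C.IsHermitian)
    (horth : C * C.conjTranspose = ((d ^ 2 + n - 1 : ℝ) : ℂ) • 1) :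
    A.transpose = A ∧ B.transpose = -B ∧ A * B = 0 ∧
      A * A - B * B = (d ^ 2 + n - 1 : ℝ) • 1 ∧
      (A + B) * (A + B).transpose = (d ^ 2 + n - 1 : ℝ) • 1 := by
  change C = complexify A B at hC
  subst hC
  obtain ⟨hAT, hBT⟩ : Aᵀ = A ∧ -Bᵀ = B := by
    rw [← complexify_inj, ← conjTranspose_complexify, hHerm.eq]
  replace hBT : Bᵀ = -B := neg_eq_iff_eq_neg.mp hBT
  obtain ⟨hsq, hanti⟩ : A * A - B * B = (d ^ 2 + n - 1 : ℝ) • 1 ∧ A * B + B * A = 0 := by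
    rwa [hHerm.eq, complexify_mul, ofReal_smul_one_eq_complexify, complexify_inj] at horth
  have hcomm : A * B = B * A := by
    rw [eq_circulant_of_apply_eq_sub hA, eq_circulant_of_apply_eq_sub hB,
      Matrix.circulant_mul_comm]
  have hAB : A * B = 0 := by
    rw [← hcomm, ← two_smul ℝ] at hanti
    exact (smul_eq_zero.mp hanti).resolve_left two_ne_zero
  refine ⟨hAT, hBT, hAB, hsq, ?_⟩
  rw [transpose_add, hAT, hBT, ← hsq, mul_add, add_mul, add_mul, mul_neg, mul_neg, ← hcomm,
    hAB]
  abel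

theorem stmt17 (n : ℕ) [NeZero n] (hn : 2 ≤ n)
    (a b : ZMod n → ℝ) (A B : Matrix (ZMod n) (ZMod n) ℝ)
    (hA : ∀ j k, A j k = a (k - j)) (hB : ∀ j k, B j k = b (k - j))
    (C : Matrix (ZMod n) (ZMod n) ℂ)
    (hC : C = A.map (fun x => (x : ℂ)) + Complex.I • B.map (fun x => (x : ℂ)))
    (d : ℝ) (hHerm : C.IsHermitian)
    (horth : C * C.conjTranspose = ((d ^ 2 + n - 1 : ℝ) : ℂ) • 1) :
    A.transpose = A ∧ B.transpose = -B ∧ A * B = 0 ∧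
      A * A - B * B = (d ^ 2 + n - 1 : ℝ) • 1 ∧
      (A + B) * (A + B).transpose = (d ^ 2 + n - 1 : ℝ) • 1 :=
  stmt17_general n a b A B hA hB C hC d hHerm horth
end

section
/- Let C be an n×n circulant matrix over the ring ℤ/mℤ with diagonal entries d and all off-diagonal entries congruent to ±1 mod m, satisfying C Cᵀ = (d² + n − 1) I over ℤ/mℤ. If m is even, then n is even. -/
/-!
Reduce the orthogonality relation modulo 2 and read off its `(0, 1)` entry, which is the
periodic autocorrelation `∑ⱼ cⱼ cⱼ₋₁` at shift one. Modulo 2 every `±1` becomes `1`, so all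
terms equal `1` except the two involving the diagonal, `c₀ c₋₁` and `c₁ c₀`, which together
contribute `2 c₀ ≡ 0`. Hence the entry is `n - 2 ≡ n`, and it must vanish since `C Cᵀ` is scalar.
-/

open Matrix

lemma mul_transpose_apply_zero_one_of_circulant {R : Type*} [CommSemiring R] {n : ℕ} [NeZero n]
    {c : ZMod n → R} {C : Matrix (ZMod n) (ZMod n) R} (hC : ∀ j k, C j k = c (k - j)) :
    (C * Cᵀ) 0 1 = ∑ j, c j * c (j - 1) := by
  simp only [mul_apply, transpose_apply, hC, sub_zero]

lemma sum_mul_sub_one_of_eq_one {R : Type*} [CommRing R] {n : ℕ} [Fact (1 < n)]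
    {e : ZMod n → R} (he : ∀ j ≠ 0, e j = 1) :
    ∑ j, e j * e (j - 1) = 2 * e 0 + (n - 2 : R) := by
  have h01 : ({0, 1} : Finset (ZMod n)) ⊆ Finset.univ := Finset.subset_univ _
  have hrest : ∀ j ∈ Finset.univ \ {0, 1}, e j * e (j - 1) = 1 := fun j hj => by
    simp only [Finset.mem_sdiff, Finset.mem_univ, Finset.mem_insert, Finset.mem_singleton,
      not_or, true_and] at hj
    rw [he j hj.1, he (j - 1) (sub_ne_zero.mpr hj.2), mul_one]
  have hcard : (Finset.univ \ {0, 1} : Finset (ZMod n)).card = n - 2 := by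
    rw [Finset.card_sdiff_of_subset h01, Finset.card_univ, ZMod.card,
      Finset.card_pair zero_ne_one]
  rw [← Finset.sum_sdiff h01, Finset.sum_congr rfl hrest, Finset.sum_pair zero_ne_one,
    Finset.sum_const, hcard, nsmul_one, Nat.cast_sub (Fact.out : 1 < n), zero_sub, sub_self,
    he _ (neg_ne_zero.mpr one_ne_zero), he 1 one_ne_zero]
  push_cast
  ring

lemma ZMod.castHom_two_eq_one_of_eq_one_or_neg_one {m : ℕ} (hm : 2 ∣ m) {x : ZMod m}
    (hx : x = 1 ∨ x = -1) : ZMod.castHom hm (ZMod 2) x = 1 := by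
  rcases hx with rfl | rfl
  · exact map_one _
  · rw [map_neg, map_one, ZMod.neg_eq_self_mod_two]

theorem stmt18_general (n m : ℕ) [NeZero n] (hn : 2 ≤ n)
    (c : ZMod n → ZMod m) (d : ZMod m)
    (C : Matrix (ZMod n) (ZMod n) (ZMod m))
    (hC : ∀ j k, C j k = c (k - j))
    (hpm1 : ∀ j : ZMod n, j ≠ 0 → c j = 1 ∨ c j = -1)
    (horth : C * C.transpose = (d ^ 2 + (n : ZMod m) - 1) • 1)
    (hm : Even m) :
    Even n := by
  have : Fact (1 < n) := ⟨hn⟩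
  let φ := ZMod.castHom hm.two_dvd (ZMod 2)
  have hoff : ∑ j, c j * c (j - 1) = 0 := by
    rw [← mul_transpose_apply_zero_one_of_circulant hC, horth, Matrix.smul_apply,
      one_apply_ne zero_ne_one, smul_zero]
  have hsum : ∑ j, φ (c j) * φ (c (j - 1)) = 2 * φ (c 0) + (n - 2 : ZMod 2) :=
    sum_mul_sub_one_of_eq_one (e := φ ∘ c) fun j hj =>
      ZMod.castHom_two_eq_one_of_eq_one_or_neg_one _ (hpm1 j hj)
  simp only [← map_mul, ← map_sum, hoff, map_zero] at hsum
  have hn2 : (n : ZMod 2) = 0 := by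
    have h2 : (2 : ZMod 2) = 0 := rfl
    rw [h2, zero_mul, zero_add, sub_zero] at hsum
    exact hsum.symm
  exact even_iff_two_dvd.mpr ((ZMod.natCast_eq_zero_iff n 2).mp hn2)

theorem stmt18 (n m : ℕ) [NeZero n] (hn : 2 ≤ n)
    (c : ZMod n → ZMod m) (d : ZMod m)
    (C : Matrix (ZMod n) (ZMod n) (ZMod m))
    (hC : ∀ j k, C j k = c (k - j))
    (hc0 : c 0 = d)
    (hpm1 : ∀ j : ZMod n, j ≠ 0 → c j = 1 ∨ c j = -1)
    (horth : C * C.transpose = (d ^ 2 + (n : ZMod m) - 1) • 1)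
    (hm : Even m) :
    Even n :=
  stmt18_general n m hn c d C hC hpm1 horth hm
end
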